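/- arXiv:1507.07633 — 10 statements merged into one kernel-verified Lean document; each statement's English description precedes it below -/
import Mathlib

section
/- If D is atomic (for every flaw f_i and every state τ there is at most one state σ ∈ f_i with τ ∈ A(i,σ)) and (D,ρ) regenerate μ at every flaw, then for every τ ∈ Ω and every flaw f_i there is exactly one σ ∈ f_i with ρ_i(σ,τ) > 0, the union of A(i,σ) over σ ∈ f_i equals Ω, and for that unique σ we have ρ_i(σ,τ) = μ(τ)·μ(f_i)/μ(σ). -/
/-!
Regeneration at `f i` says `∑_{σ ∈ f i} μ σ ρ_i(σ, τ) = μ τ · μ(f i) > 0`, so some `σ ∈ f i` has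
`ρ_i(σ, τ) > 0`, and then `τ ∈ A i σ`. Atomicity allows at most one such `σ`, so the sum collapses
to the single term `μ σ ρ_i(σ, τ)`, which gives the formula for `ρ_i(σ, τ)`.
-/

namespace Finset

variable {α : Type*} {s : Finset α} {w r : α → ℝ}

theorem exists_pos_of_sum_mul_pos (hw : ∀ σ ∈ s, 0 ≤ w σ) (h : 0 < ∑ σ ∈ s, w σ * r σ) :
    ∃ σ ∈ s, 0 < r σ := by
  obtain ⟨σ, hσ, hpos⟩ := exists_lt_of_sum_lt (by simpa using h : ∑ _σ ∈ s, (0 : ℝ) < _)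
  exact ⟨σ, hσ, pos_of_mul_pos_right hpos (hw σ hσ)⟩

theorem sum_mul_eq_of_unique_pos (hr : ∀ σ ∈ s, 0 ≤ r σ)
    (huniq : ∀ σ ∈ s, ∀ σ' ∈ s, 0 < r σ → 0 < r σ' → σ = σ') {σ : α} (hσ : σ ∈ s)
    (hpos : 0 < r σ) : ∑ σ' ∈ s, w σ' * r σ' = w σ * r σ := by
  refine sum_eq_single_of_mem σ hσ fun σ' hσ' hne => ?_
  have hzero : r σ' = 0 :=
    (hr σ' hσ').eq_or_lt.elim Eq.symm fun hpos' => absurd (huniq σ' hσ' σ hσ hpos' hpos) hne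
  rw [hzero, mul_zero]

end Finset

theorem stmt_0_general {Ω ι : Type*}
    (μ : Ω → ℝ) (hμpos : ∀ σ, 0 < μ σ)
    (f : ι → Finset Ω) (hf : ∀ i, (f i).Nonempty)
    (A : ι → Ω → Finset Ω)
    (ρ : ι → Ω → Ω → ℝ)
    (hρ0 : ∀ i σ τ, 0 ≤ ρ i σ τ)
    (hρsupp : ∀ i, ∀ σ ∈ f i, ∀ τ, τ ∉ A i σ → ρ i σ τ = 0)
    (hatomic : ∀ i (τ : Ω), ∀ σ ∈ f i, ∀ σ' ∈ f i, τ ∈ A i σ → τ ∈ A i σ' → σ = σ')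
    (hregen : ∀ i (τ : Ω), (∑ σ ∈ f i, μ σ * ρ i σ τ) / (∑ σ ∈ f i, μ σ) = μ τ) :
    ∀ i (τ : Ω),
      (∃! σ, σ ∈ f i ∧ 0 < ρ i σ τ) ∧
      (∃ σ ∈ f i, τ ∈ A i σ) ∧
      (∀ σ ∈ f i, 0 < ρ i σ τ → ρ i σ τ = μ τ * (∑ σ' ∈ f i, μ σ') / μ σ) := by
  intro i τ
  have hmass : 0 < ∑ σ ∈ f i, μ σ := Finset.sum_pos (fun σ _ => hμpos σ) (hf i)
  have hbalance : ∑ σ ∈ f i, μ σ * ρ i σ τ = μ τ * ∑ σ ∈ f i, μ σ := by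
    rw [← hregen i τ, div_mul_cancel₀ _ hmass.ne']
  have hmem : ∀ σ ∈ f i, 0 < ρ i σ τ → τ ∈ A i σ := fun σ hσ hpos =>
    not_not.mp fun hτ => hpos.ne' (hρsupp i σ hσ τ hτ)
  have huniq : ∀ σ ∈ f i, ∀ σ' ∈ f i, 0 < ρ i σ τ → 0 < ρ i σ' τ → σ = σ' :=
    fun σ hσ σ' hσ' hpos hpos' => hatomic i τ σ hσ σ' hσ' (hmem σ hσ hpos) (hmem σ' hσ' hpos')
  obtain ⟨σ₀, hσ₀, hpos₀⟩ := Finset.exists_pos_of_sum_mul_pos (fun σ _ => (hμpos σ).le)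
    (hbalance ▸ mul_pos (hμpos τ) hmass)
  refine ⟨⟨σ₀, ⟨hσ₀, hpos₀⟩, fun σ hσ => huniq σ hσ.1 σ₀ hσ₀ hσ.2 hpos₀⟩,
    ⟨σ₀, hσ₀, hmem σ₀ hσ₀ hpos₀⟩, fun σ hσ hpos => ?_⟩
  rw [eq_div_iff (hμpos σ).ne', mul_comm, ← hbalance,
    Finset.sum_mul_eq_of_unique_pos (fun σ' _ => hρ0 i σ' τ) huniq hσ hpos]

/-- If the action digraph is atomic and `(D,ρ)` regenerate `μ` at every flaw, then for
every state `τ` and every flaw `f i` there is exactly one `σ ∈ f i` with `ρ i σ τ > 0`,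
the union of the action sets `A i σ` over `σ ∈ f i` is all of `Ω`, and for any such `σ`
we have `ρ i σ τ = μ τ * μ(f i) / μ σ`. -/
theorem stmt_0 {Ω ι : Type*} [Fintype Ω] [DecidableEq Ω]
    (μ : Ω → ℝ) (hμpos : ∀ σ, 0 < μ σ) (hμ1 : ∑ σ, μ σ = 1)
    (f : ι → Finset Ω) (hf : ∀ i, (f i).Nonempty)
    (A : ι → Ω → Finset Ω) (hA : ∀ i, ∀ σ ∈ f i, (A i σ).Nonempty)
    (ρ : ι → Ω → Ω → ℝ)
    (hρ0 : ∀ i σ τ, 0 ≤ ρ i σ τ)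
    (hρsupp : ∀ i, ∀ σ ∈ f i, ∀ τ, τ ∉ A i σ → ρ i σ τ = 0)
    (hρsum : ∀ i, ∀ σ ∈ f i, ∑ τ, ρ i σ τ = 1)
    (hatomic : ∀ i (τ : Ω), ∀ σ ∈ f i, ∀ σ' ∈ f i, τ ∈ A i σ → τ ∈ A i σ' → σ = σ')
    (hregen : ∀ i (τ : Ω), (∑ σ ∈ f i, μ σ * ρ i σ τ) / (∑ σ ∈ f i, μ σ) = μ τ) :
    ∀ i (τ : Ω),
      (∃! σ, σ ∈ f i ∧ 0 < ρ i σ τ) ∧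
      (∃ σ ∈ f i, τ ∈ A i σ) ∧
      (∀ σ ∈ f i, 0 < ρ i σ τ → ρ i σ τ = μ τ * (∑ σ' ∈ f i, μ σ') / μ σ) :=
  stmt_0_general μ hμpos f hf A ρ hρ0 hρsupp hatomic hregen
end

section
/- If D is atomic and (D,ρ) regenerate μ at every flaw, then for every flaw f_i and every σ ∈ f_i, Σ_{τ ∈ A(i,σ)} μ(τ) = μ(σ)/μ(f_i). -/
/-! By atomicity, the regeneration identity at an action `τ ∈ A i σ` has a single nonzero
term, so `μ τ = μ σ * ρ i σ τ / μ (f i)`; summing over `τ ∈ A i σ`, where `ρ i σ` has all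
its mass, gives `μ σ / μ (f i)`. -/

open Finset

section SingleFlaw

variable {Ω : Type*} (μ : Ω → ℝ) {F : Finset Ω} {A : Ω → Finset Ω} {ρ : Ω → Ω → ℝ}

theorem sum_mul_transition_eq_single_of_atomic
    (hsupp : ∀ σ ∈ F, ∀ τ, τ ∉ A σ → ρ σ τ = 0)
    (hatomic : ∀ τ, ∀ σ ∈ F, ∀ σ' ∈ F, τ ∈ A σ → τ ∈ A σ' → σ = σ')
    {σ τ : Ω} (hσ : σ ∈ F) (hτ : τ ∈ A σ) :
    ∑ σ' ∈ F, μ σ' * ρ σ' τ = μ σ * ρ σ τ := by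
  refine sum_eq_single_of_mem σ hσ fun σ' hσ' hne => ?_
  have hτ' : τ ∉ A σ' := fun h => hne (hatomic τ σ' hσ' σ hσ h hτ)
  rw [hsupp σ' hσ' τ hτ', mul_zero]

theorem sum_action_eq_div_of_atomic_of_regenerates [Fintype Ω]
    (hsupp : ∀ σ ∈ F, ∀ τ, τ ∉ A σ → ρ σ τ = 0)
    (hatomic : ∀ τ, ∀ σ ∈ F, ∀ σ' ∈ F, τ ∈ A σ → τ ∈ A σ' → σ = σ')
    (hregen : ∀ τ, (∑ σ ∈ F, μ σ * ρ σ τ) / (∑ σ ∈ F, μ σ) = μ τ)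
    {σ : Ω} (hσ : σ ∈ F) (hsum : ∑ τ, ρ σ τ = 1) :
    ∑ τ ∈ A σ, μ τ = μ σ / ∑ σ' ∈ F, μ σ' := by
  have hmass : ∑ τ ∈ A σ, ρ σ τ = 1 := by
    rw [← hsum]
    exact sum_subset (subset_univ _) fun τ _ hτ => hsupp σ hσ τ hτ
  calc ∑ τ ∈ A σ, μ τ
      = ∑ τ ∈ A σ, μ σ * ρ σ τ / ∑ σ' ∈ F, μ σ' := sum_congr rfl fun τ hτ => by
        rw [← hregen τ, sum_mul_transition_eq_single_of_atomic μ hsupp hatomic hσ hτ]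
    _ = μ σ / ∑ σ' ∈ F, μ σ' := by rw [← sum_div, ← mul_sum, hmass, mul_one]

end SingleFlaw

theorem stmt_1_general {Ω ι : Type*} [Fintype Ω]
    (μ : Ω → ℝ)
    (f : ι → Finset Ω)
    (A : ι → Ω → Finset Ω)
    (ρ : ι → Ω → Ω → ℝ)
    (hρsupp : ∀ i, ∀ σ ∈ f i, ∀ τ, τ ∉ A i σ → ρ i σ τ = 0)
    (hρsum : ∀ i, ∀ σ ∈ f i, ∑ τ, ρ i σ τ = 1)
    (hatomic : ∀ i (τ : Ω), ∀ σ ∈ f i, ∀ σ' ∈ f i, τ ∈ A i σ → τ ∈ A i σ' → σ = σ')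
    (hregen : ∀ i (τ : Ω), (∑ σ ∈ f i, μ σ * ρ i σ τ) / (∑ σ ∈ f i, μ σ) = μ τ) :
    ∀ i, ∀ σ ∈ f i, ∑ τ ∈ A i σ, μ τ = μ σ / (∑ σ' ∈ f i, μ σ') := fun i _ hσ =>
  sum_action_eq_div_of_atomic_of_regenerates μ (hρsupp i) (hatomic i) (hregen i) hσ
    (hρsum i _ hσ)

/-- If the action digraph is atomic and `(D,ρ)` regenerate `μ` at every flaw, then for
every flaw `f i` and every `σ ∈ f i`, `∑_{τ ∈ A i σ} μ τ = μ σ / μ(f i)`. -/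
theorem stmt_1 {Ω ι : Type*} [Fintype Ω] [DecidableEq Ω]
    (μ : Ω → ℝ) (hμpos : ∀ σ, 0 < μ σ) (hμ1 : ∑ σ, μ σ = 1)
    (f : ι → Finset Ω) (hf : ∀ i, (f i).Nonempty)
    (A : ι → Ω → Finset Ω) (hA : ∀ i, ∀ σ ∈ f i, (A i σ).Nonempty)
    (ρ : ι → Ω → Ω → ℝ)
    (hρ0 : ∀ i σ τ, 0 ≤ ρ i σ τ)
    (hρsupp : ∀ i, ∀ σ ∈ f i, ∀ τ, τ ∉ A i σ → ρ i σ τ = 0)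
    (hρsum : ∀ i, ∀ σ ∈ f i, ∑ τ, ρ i σ τ = 1)
    (hatomic : ∀ i (τ : Ω), ∀ σ ∈ f i, ∀ σ' ∈ f i, τ ∈ A i σ → τ ∈ A i σ' → σ = σ')
    (hregen : ∀ i (τ : Ω), (∑ σ ∈ f i, μ σ * ρ i σ τ) / (∑ σ ∈ f i, μ σ) = μ τ) :
    ∀ i, ∀ σ ∈ f i, ∑ τ ∈ A i σ, μ τ = μ σ / (∑ σ' ∈ f i, μ σ') :=
  stmt_1_general μ f A ρ hρsupp hρsum hatomic hregen
end

section
/- If D is atomic and (D,ρ) regenerate μ at every flaw, then (D,ρ,μ) is harmonic: for every i, every σ ∈ f_i, and every τ ∈ A(i,σ), ρ_i(σ,τ) = μ(τ) / Σ_{σ' ∈ A(i,σ)} μ(σ'). -/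
/-!
Atomicity makes the regeneration sum at `τ ∈ A σ` collapse to the single term `μ σ ρ(σ, τ)`,
so `ρ(σ, τ) = μ τ · μ(f) / μ σ`. Summing over `τ ∈ A σ`, where `ρ(σ, ·)` has total mass one,
gives `μ σ = μ(A σ) · μ(f)`, and substituting back yields `ρ(σ, τ) = μ τ / μ(A σ)`.
-/

open Finset

section SingleFlaw

variable {Ω : Type*} {s : Finset Ω} {A : Ω → Finset Ω} {ρ : Ω → Ω → ℝ}

theorem sum_mul_eq_of_atomic {R : Type*} [NonUnitalNonAssocSemiring R] {ρ : Ω → Ω → R}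
    (w : Ω → R) (hsupp : ∀ σ ∈ s, ∀ τ, τ ∉ A σ → ρ σ τ = 0)
    (hatomic : ∀ τ, ∀ σ ∈ s, ∀ σ' ∈ s, τ ∈ A σ → τ ∈ A σ' → σ = σ')
    {σ τ : Ω} (hσ : σ ∈ s) (hτ : τ ∈ A σ) :
    ∑ σ' ∈ s, w σ' * ρ σ' τ = w σ * ρ σ τ := by
  refine sum_eq_single_of_mem σ hσ fun σ' hσ' hne => ?_
  have hτ' : τ ∉ A σ' := fun h => hne (hatomic τ σ' hσ' σ hσ h hτ)
  rw [hsupp σ' hσ' τ hτ', mul_zero]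

theorem sum_eq_one_of_support [Fintype Ω] {σ : Ω} (hsupp : ∀ τ, τ ∉ A σ → ρ σ τ = 0)
    (hsum : ∑ τ, ρ σ τ = 1) : ∑ τ ∈ A σ, ρ σ τ = 1 := by
  rwa [sum_subset (subset_univ (A σ)) fun τ _ hτ => hsupp τ hτ]

variable {μ : Ω → ℝ} (hμpos : ∀ σ, 0 < μ σ)
  (hsupp : ∀ σ ∈ s, ∀ τ, τ ∉ A σ → ρ σ τ = 0)
  (hatomic : ∀ τ, ∀ σ ∈ s, ∀ σ' ∈ s, τ ∈ A σ → τ ∈ A σ' → σ = σ')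
  (hregen : ∀ τ, (∑ σ ∈ s, μ σ * ρ σ τ) / (∑ σ ∈ s, μ σ) = μ τ)
include hμpos hsupp hatomic hregen

theorem mul_eq_mul_sum_of_regen {σ τ : Ω} (hσ : σ ∈ s) (hτ : τ ∈ A σ) :
    μ σ * ρ σ τ = μ τ * ∑ σ' ∈ s, μ σ' := by
  have hpos : 0 < ∑ σ' ∈ s, μ σ' := sum_pos (fun σ' _ => hμpos σ') ⟨σ, hσ⟩
  rw [← hregen τ, sum_mul_eq_of_atomic μ hsupp hatomic hσ hτ, div_mul_cancel₀ _ hpos.ne']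

theorem eq_sum_mul_sum_of_regen [Fintype Ω] (hsum : ∀ σ ∈ s, ∑ τ, ρ σ τ = 1)
    {σ : Ω} (hσ : σ ∈ s) : μ σ = (∑ τ ∈ A σ, μ τ) * ∑ σ' ∈ s, μ σ' := by
  calc μ σ = ∑ τ ∈ A σ, μ σ * ρ σ τ := by
        rw [← mul_sum, sum_eq_one_of_support (hsupp σ hσ) (hsum σ hσ), mul_one]
    _ = ∑ τ ∈ A σ, μ τ * ∑ σ' ∈ s, μ σ' :=
        sum_congr rfl fun τ hτ => mul_eq_mul_sum_of_regen hμpos hsupp hatomic hregen hσ hτ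
    _ = (∑ τ ∈ A σ, μ τ) * ∑ σ' ∈ s, μ σ' := (sum_mul ..).symm

theorem eq_div_sum_of_regen [Fintype Ω] (hsum : ∀ σ ∈ s, ∑ τ, ρ σ τ = 1)
    {σ τ : Ω} (hσ : σ ∈ s) (hτ : τ ∈ A σ) : ρ σ τ = μ τ / ∑ σ' ∈ A σ, μ σ' := by
  have hM : 0 < ∑ σ' ∈ s, μ σ' := sum_pos (fun σ' _ => hμpos σ') ⟨σ, hσ⟩
  have hS : 0 < ∑ σ' ∈ A σ, μ σ' := sum_pos (fun σ' _ => hμpos σ') ⟨τ, hτ⟩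
  have key := mul_eq_mul_sum_of_regen hμpos hsupp hatomic hregen hσ hτ
  rw [eq_sum_mul_sum_of_regen hμpos hsupp hatomic hregen hsum hσ] at key
  rw [eq_div_iff hS.ne']
  exact mul_right_cancel₀ hM.ne' (by linear_combination key)

end SingleFlaw

theorem stmt_2_general {Ω ι : Type*} [Fintype Ω]
    (μ : Ω → ℝ) (hμpos : ∀ σ, 0 < μ σ)
    (f : ι → Finset Ω)
    (A : ι → Ω → Finset Ω)
    (ρ : ι → Ω → Ω → ℝ)
    (hρsupp : ∀ i, ∀ σ ∈ f i, ∀ τ, τ ∉ A i σ → ρ i σ τ = 0)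
    (hρsum : ∀ i, ∀ σ ∈ f i, ∑ τ, ρ i σ τ = 1)
    (hatomic : ∀ i (τ : Ω), ∀ σ ∈ f i, ∀ σ' ∈ f i, τ ∈ A i σ → τ ∈ A i σ' → σ = σ')
    (hregen : ∀ i (τ : Ω), (∑ σ ∈ f i, μ σ * ρ i σ τ) / (∑ σ ∈ f i, μ σ) = μ τ) :
    ∀ i, ∀ σ ∈ f i, ∀ τ ∈ A i σ, ρ i σ τ = μ τ / (∑ σ' ∈ A i σ, μ σ') :=
  fun i _ hσ _ hτ =>
    eq_div_sum_of_regen hμpos (hρsupp i) (hatomic i) (hregen i) (hρsum i) hσ hτ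

/-- If the action digraph is atomic and `(D,ρ)` regenerate `μ` at every flaw, then
`(D,ρ,μ)` is harmonic: for every flaw `f i`, every `σ ∈ f i` and `τ ∈ A i σ`,
`ρ i σ τ = μ τ / ∑_{σ' ∈ A i σ} μ σ'`. -/
theorem stmt_2 {Ω ι : Type*} [Fintype Ω] [DecidableEq Ω]
    (μ : Ω → ℝ) (hμpos : ∀ σ, 0 < μ σ) (hμ1 : ∑ σ, μ σ = 1)
    (f : ι → Finset Ω) (hf : ∀ i, (f i).Nonempty)
    (A : ι → Ω → Finset Ω) (hA : ∀ i, ∀ σ ∈ f i, (A i σ).Nonempty)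
    (ρ : ι → Ω → Ω → ℝ)
    (hρ0 : ∀ i σ τ, 0 ≤ ρ i σ τ)
    (hρsupp : ∀ i, ∀ σ ∈ f i, ∀ τ, τ ∉ A i σ → ρ i σ τ = 0)
    (hρsum : ∀ i, ∀ σ ∈ f i, ∑ τ, ρ i σ τ = 1)
    (hatomic : ∀ i (τ : Ω), ∀ σ ∈ f i, ∀ σ' ∈ f i, τ ∈ A i σ → τ ∈ A i σ' → σ = σ')
    (hregen : ∀ i (τ : Ω), (∑ σ ∈ f i, μ σ * ρ i σ τ) / (∑ σ ∈ f i, μ σ) = μ τ) :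
    ∀ i, ∀ σ ∈ f i, ∀ τ ∈ A i σ, ρ i σ τ = μ τ / (∑ σ' ∈ A i σ, μ σ') :=
  stmt_2_general μ hμpos f A ρ hρsupp hρsum hatomic hregen
end

section
/- Define λ_i^σ = max_{τ ∈ A(i,σ)} ρ_i(σ,τ)·μ(σ)/μ(τ), b_i = max_{τ ∈ Ω} |{σ ∈ f_i : τ ∈ A(i,σ)}|, and γ_i = b_i · max_{σ ∈ f_i} λ_i^σ. Then γ_i ≥ μ(f_i). -/
/-!
Since `ρ(σ, ·)` is a probability distribution on `A(σ)`, for `σ ∈ f` we get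
`μ(σ) = ∑_{τ ∈ A(σ)} ρ(σ,τ) μ(σ) ≤ λ ∑_{τ ∈ A(σ)} μ(τ)` with `λ = max_σ λ^σ`.
Summing over `σ ∈ f` and double counting, each `τ` is counted at most `b` times,
so `μ(f) ≤ λ b ∑_τ μ(τ) = b λ`.
-/

open Finset

theorem Finset.sum_sum_eq_sum_card_filter_mul {α β : Type*} [Fintype β] [DecidableEq β]
    (s : Finset α) (A : α → Finset β) (g : β → ℝ) :
    ∑ σ ∈ s, ∑ τ ∈ A σ, g τ = ∑ τ, (#{σ ∈ s | τ ∈ A σ} : ℝ) * g τ := by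
  rw [sum_comm' (t' := univ) (s' := fun τ => {σ ∈ s | τ ∈ A σ}) (by simp)]
  simp [sum_const]

theorem Finset.sum_sum_le_mul_sum_of_card_filter_le {α β : Type*} [Fintype β] [DecidableEq β]
    {s : Finset α} {A : α → Finset β} {g : β → ℝ} {b : ℕ} (hg : ∀ τ, 0 ≤ g τ)
    (hb : ∀ τ, #{σ ∈ s | τ ∈ A σ} ≤ b) :
    ∑ σ ∈ s, ∑ τ ∈ A σ, g τ ≤ b * ∑ τ, g τ := by
  rw [sum_sum_eq_sum_card_filter_mul, mul_sum]
  gcongr with τ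
  · exact hg τ
  · exact_mod_cast hb τ

theorem le_mul_sum_of_forall_mul_div_le {ι : Type*} {s : Finset ι} {p w : ι → ℝ} {x l : ℝ}
    (hw : ∀ τ ∈ s, 0 < w τ) (hp : ∑ τ ∈ s, p τ = 1) (h : ∀ τ ∈ s, p τ * x / w τ ≤ l) :
    x ≤ l * ∑ τ ∈ s, w τ :=
  calc x = ∑ τ ∈ s, p τ * x := by rw [← sum_mul, hp, one_mul]
    _ ≤ ∑ τ ∈ s, l * w τ := sum_le_sum fun τ hτ => (div_le_iff₀ (hw τ hτ)).1 (h τ hτ)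
    _ = l * ∑ τ ∈ s, w τ := (mul_sum _ _ _).symm

theorem stmt_3_general {Ω : Type*} [Fintype Ω] [DecidableEq Ω]
    (μ : Ω → ℝ) (hμpos : ∀ σ, 0 < μ σ) (hμ1 : ∑ σ, μ σ = 1)
    (fi : Finset Ω)
    (A : Ω → Finset Ω)
    (ρ : Ω → Ω → ℝ) (hρ0 : ∀ σ τ, 0 ≤ ρ σ τ)
    (hρsupp : ∀ σ ∈ fi, ∀ τ, τ ∉ A σ → ρ σ τ = 0)
    (hρsum : ∀ σ ∈ fi, ∑ τ, ρ σ τ = 1)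
    (lam : Ω → ℝ)
    (hlam : ∀ σ ∈ fi, IsGreatest {x : ℝ | ∃ τ ∈ A σ, x = ρ σ τ * μ σ / μ τ} (lam σ))
    (b : ℕ)
    (hb : IsGreatest {n : ℕ | ∃ τ : Ω, n = (fi.filter fun σ => τ ∈ A σ).card} b)
    (lmax : ℝ) (hlmax : IsGreatest {x : ℝ | ∃ σ ∈ fi, x = lam σ} lmax) :
    ∑ σ ∈ fi, μ σ ≤ (b : ℝ) * lmax := by
  have hlmax0 : 0 ≤ lmax := by
    obtain ⟨σ, hσ, rfl⟩ := hlmax.1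
    obtain ⟨τ, -, hτ⟩ := (hlam σ hσ).1
    rw [hτ]
    exact div_nonneg (mul_nonneg (hρ0 σ τ) (hμpos σ).le) (hμpos τ).le
  have hpoint : ∀ σ ∈ fi, μ σ ≤ lmax * ∑ τ ∈ A σ, μ τ := fun σ hσ =>
    le_mul_sum_of_forall_mul_div_le (fun τ _ => hμpos τ)
      ((sum_subset (subset_univ _) fun τ _ hτ => hρsupp σ hσ τ hτ).trans (hρsum σ hσ))
      fun τ hτ => ((hlam σ hσ).2 ⟨τ, hτ, rfl⟩).trans (hlmax.2 ⟨σ, hσ, rfl⟩)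
  have hcount : ∑ σ ∈ fi, ∑ τ ∈ A σ, μ τ ≤ b * ∑ τ, μ τ :=
    sum_sum_le_mul_sum_of_card_filter_le (fun τ => (hμpos τ).le) fun τ => hb.2 ⟨τ, rfl⟩
  calc ∑ σ ∈ fi, μ σ ≤ ∑ σ ∈ fi, lmax * ∑ τ ∈ A σ, μ τ := sum_le_sum hpoint
    _ = lmax * ∑ σ ∈ fi, ∑ τ ∈ A σ, μ τ := (mul_sum _ _ _).symm
    _ ≤ lmax * (b * ∑ τ, μ τ) := mul_le_mul_of_nonneg_left hcount hlmax0
    _ = b * lmax := by rw [hμ1]; ring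

/-- With `λ_i^σ = max_{τ ∈ A(i,σ)} ρ_i(σ,τ) μ(σ)/μ(τ)`,
`b_i = max_τ |{σ ∈ f_i : τ ∈ A(i,σ)}|` and `γ_i = b_i · max_{σ ∈ f_i} λ_i^σ`,
one has `γ_i ≥ μ(f_i)`. -/
theorem stmt_3 {Ω : Type*} [Fintype Ω] [DecidableEq Ω]
    (μ : Ω → ℝ) (hμpos : ∀ σ, 0 < μ σ) (hμ1 : ∑ σ, μ σ = 1)
    (fi : Finset Ω) (hfi : fi.Nonempty)
    (A : Ω → Finset Ω) (hA : ∀ σ ∈ fi, (A σ).Nonempty)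
    (ρ : Ω → Ω → ℝ) (hρ0 : ∀ σ τ, 0 ≤ ρ σ τ)
    (hρsupp : ∀ σ ∈ fi, ∀ τ, τ ∉ A σ → ρ σ τ = 0)
    (hρsum : ∀ σ ∈ fi, ∑ τ, ρ σ τ = 1)
    (lam : Ω → ℝ)
    (hlam : ∀ σ ∈ fi, IsGreatest {x : ℝ | ∃ τ ∈ A σ, x = ρ σ τ * μ σ / μ τ} (lam σ))
    (b : ℕ)
    (hb : IsGreatest {n : ℕ | ∃ τ : Ω, n = (fi.filter fun σ => τ ∈ A σ).card} b)
    (lmax : ℝ) (hlmax : IsGreatest {x : ℝ | ∃ σ ∈ fi, x = lam σ} lmax) :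
    ∑ σ ∈ fi, μ σ ≤ (b : ℝ) * lmax :=
  stmt_3_general μ hμpos hμ1 fi A ρ hρ0 hρsupp hρsum lam hlam b hb lmax hlmax
end

section
/- In any proper edge-coloring of a graph G of maximum degree Δ, for any edge e the number of 4-forbidden colors for e is at most 2(Δ−1). Here a color c is 4-forbidden for e = {u,v} if assigning c to e would either violate properness (c appears on an edge adjacent to e) or create a bichromatic 4-cycle through e. -/
/-- In a (partial) proper edge-coloring of a graph of maximum degree `Δ`, for any edge
`{u,v}` the number of 4-forbidden colors — colors appearing on an edge adjacent to `{u,v}`,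
or colors whose assignment to `{u,v}` would create a bichromatic 4-cycle through it —
is at most `2(Δ-1)`. -/
theorem stmt_7 {V : Type*} [Fintype V] [DecidableEq V] {P : Type*} [Fintype P]
    (G : SimpleGraph V) [DecidableRel G.Adj]
    (Δ : ℕ) (hΔ : ∀ v, G.degree v ≤ Δ)
    (col : Sym2 V → Option P)
    (hproper : ∀ a b c : V, G.Adj a b → G.Adj a c → b ≠ c →
      ∀ p : P, col s(a, b) = some p → col s(a, c) ≠ some p)
    (u v : V) (huv : G.Adj u v) :
    {c : P |
      (∃ w, (G.Adj u w ∧ w ≠ v ∧ col s(u, w) = some c) ∨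
            (G.Adj v w ∧ w ≠ u ∧ col s(v, w) = some c)) ∨
      (∃ w x, G.Adj v w ∧ G.Adj w x ∧ G.Adj x u ∧ w ≠ u ∧ x ≠ v ∧
        col s(w, x) = some c ∧ (col s(v, w)).isSome ∧ col s(v, w) = col s(x, u))}.ncard
      ≤ 2 * (Δ - 1) := by
  classical
  set T : Set (V ⊕ V) :=
    Sum.inl '' (G.neighborSet u \ {v}) ∪ Sum.inr '' (G.neighborSet v \ {u}) with hTdef
  have hle : {c : P |
      (∃ w, (G.Adj u w ∧ w ≠ v ∧ col s(u, w) = some c) ∨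
            (G.Adj v w ∧ w ≠ u ∧ col s(v, w) = some c)) ∨
      (∃ w x, G.Adj v w ∧ G.Adj w x ∧ G.Adj x u ∧ w ≠ u ∧ x ≠ v ∧
        col s(w, x) = some c ∧ (col s(v, w)).isSome ∧ col s(v, w) = col s(x, u))}.ncard
      ≤ T.ncard := by
    refine Set.ncard_le_ncard_of_injOn (fun c =>
        if h1 : ∃ w, G.Adj u w ∧ w ≠ v ∧ col s(u, w) = some c then Sum.inl h1.choose
        else if h2 : ∃ w, G.Adj v w ∧ w ≠ u ∧ col s(v, w) = some c then Sum.inr h2.choose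
        else if h3 : ∃ w x, G.Adj v w ∧ G.Adj w x ∧ G.Adj x u ∧ w ≠ u ∧ x ≠ v ∧
            col s(w, x) = some c ∧ (col s(v, w)).isSome ∧ col s(v, w) = col s(x, u) then
          Sum.inr h3.choose
        else Sum.inl u) ?_ ?_ (Set.toFinite T)
    · intro c hc
      simp only [Set.mem_setOf_eq] at hc
      by_cases h1 : ∃ w, G.Adj u w ∧ w ≠ v ∧ col s(u, w) = some c
      · simp only [dif_pos h1]
        exact Or.inl ⟨h1.choose, ⟨h1.choose_spec.1, h1.choose_spec.2.1⟩, rfl⟩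
      · by_cases h2 : ∃ w, G.Adj v w ∧ w ≠ u ∧ col s(v, w) = some c
        · simp only [dif_neg h1, dif_pos h2]
          exact Or.inr ⟨h2.choose, ⟨h2.choose_spec.1, h2.choose_spec.2.1⟩, rfl⟩
        · have h3 : ∃ w x, G.Adj v w ∧ G.Adj w x ∧ G.Adj x u ∧ w ≠ u ∧ x ≠ v ∧
              col s(w, x) = some c ∧ (col s(v, w)).isSome ∧ col s(v, w) = col s(x, u) := by
            rcases hc with ⟨w, hw | hw⟩ | h
            · exact absurd ⟨w, hw⟩ h1
            · exact absurd ⟨w, hw⟩ h2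
            · exact h
          simp only [dif_neg h1, dif_neg h2, dif_pos h3]
          obtain ⟨x, hx⟩ := h3.choose_spec
          exact Or.inr ⟨h3.choose, ⟨hx.1, hx.2.2.2.1⟩, rfl⟩
    · intro c hc c' hc' hfe
      simp only [Set.mem_setOf_eq] at hc hc'
      simp only at hfe
      by_cases h1 : ∃ w, G.Adj u w ∧ w ≠ v ∧ col s(u, w) = some c
      · by_cases h1' : ∃ w, G.Adj u w ∧ w ≠ v ∧ col s(u, w) = some c'
        · rw [dif_pos h1, dif_pos h1'] at hfe
          have hw := h1.choose_spec
          have hw' := h1'.choose_spec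
          have heq : h1.choose = h1'.choose := Sum.inl.inj hfe
          rw [heq] at hw
          exact Option.some.inj (hw.2.2.symm.trans hw'.2.2)
        · rw [dif_pos h1, dif_neg h1'] at hfe
          by_cases h2' : ∃ w, G.Adj v w ∧ w ≠ u ∧ col s(v, w) = some c'
          · rw [dif_pos h2'] at hfe; simp at hfe
          · have h3' : ∃ w x, G.Adj v w ∧ G.Adj w x ∧ G.Adj x u ∧ w ≠ u ∧ x ≠ v ∧
                col s(w, x) = some c' ∧ (col s(v, w)).isSome ∧ col s(v, w) = col s(x, u) := by
              rcases hc' with ⟨w, hw | hw⟩ | h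
              · exact absurd ⟨w, hw⟩ h1'
              · exact absurd ⟨w, hw⟩ h2'
              · exact h
            rw [dif_neg h2', dif_pos h3'] at hfe; simp at hfe
      · rw [dif_neg h1] at hfe
        by_cases h1' : ∃ w, G.Adj u w ∧ w ≠ v ∧ col s(u, w) = some c'
        · rw [dif_pos h1'] at hfe
          by_cases h2 : ∃ w, G.Adj v w ∧ w ≠ u ∧ col s(v, w) = some c
          · rw [dif_pos h2] at hfe; simp at hfe
          · have h3 : ∃ w x, G.Adj v w ∧ G.Adj w x ∧ G.Adj x u ∧ w ≠ u ∧ x ≠ v ∧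
                col s(w, x) = some c ∧ (col s(v, w)).isSome ∧ col s(v, w) = col s(x, u) := by
              rcases hc with ⟨w, hw | hw⟩ | h
              · exact absurd ⟨w, hw⟩ h1
              · exact absurd ⟨w, hw⟩ h2
              · exact h
            rw [dif_neg h2, dif_pos h3] at hfe; simp at hfe
        · rw [dif_neg h1'] at hfe
          by_cases h2 : ∃ w, G.Adj v w ∧ w ≠ u ∧ col s(v, w) = some c
          · rw [dif_pos h2] at hfe
            by_cases h2' : ∃ w, G.Adj v w ∧ w ≠ u ∧ col s(v, w) = some c'
            · rw [dif_pos h2'] at hfe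
              have hw := h2.choose_spec
              have hw' := h2'.choose_spec
              have heq : h2.choose = h2'.choose := Sum.inr.inj hfe
              rw [heq] at hw
              exact Option.some.inj (hw.2.2.symm.trans hw'.2.2)
            · have h3' : ∃ w x, G.Adj v w ∧ G.Adj w x ∧ G.Adj x u ∧ w ≠ u ∧ x ≠ v ∧
                  col s(w, x) = some c' ∧ (col s(v, w)).isSome ∧ col s(v, w) = col s(x, u) := by
                rcases hc' with ⟨w, hw | hw⟩ | h
                · exact absurd ⟨w, hw⟩ h1'
                · exact absurd ⟨w, hw⟩ h2'
                · exact h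
              rw [dif_neg h2', dif_pos h3'] at hfe
              have hw := h2.choose_spec
              obtain ⟨x, hx⟩ := h3'.choose_spec
              have heq : h2.choose = h3'.choose := Sum.inr.inj hfe
              rw [heq] at hw
              -- col s(v, w) = some c  and  col s(v, w) = col s(x, u)  so  col s(x,u) = some c
              have hxu : col s(u, x) = some c := by
                rw [Sym2.eq_swap]
                rw [← hx.2.2.2.2.2.2.2]
                exact hw.2.2
              exact absurd ⟨x, hx.2.2.1.symm, hx.2.2.2.2.1, hxu⟩ h1
          · have h3 : ∃ w x, G.Adj v w ∧ G.Adj w x ∧ G.Adj x u ∧ w ≠ u ∧ x ≠ v ∧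
                col s(w, x) = some c ∧ (col s(v, w)).isSome ∧ col s(v, w) = col s(x, u) := by
              rcases hc with ⟨w, hw | hw⟩ | h
              · exact absurd ⟨w, hw⟩ h1
              · exact absurd ⟨w, hw⟩ h2
              · exact h
            rw [dif_neg h2, dif_pos h3] at hfe
            by_cases h2' : ∃ w, G.Adj v w ∧ w ≠ u ∧ col s(v, w) = some c'
            · rw [dif_pos h2'] at hfe
              have hw' := h2'.choose_spec
              obtain ⟨x, hx⟩ := h3.choose_spec
              have heq : h3.choose = h2'.choose := Sum.inr.inj hfe
              rw [← heq] at hw'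
              have hxu : col s(u, x) = some c' := by
                rw [Sym2.eq_swap]
                rw [← hx.2.2.2.2.2.2.2]
                exact hw'.2.2
              exact absurd ⟨x, hx.2.2.1.symm, hx.2.2.2.2.1, hxu⟩ h1'
            · have h3' : ∃ w x, G.Adj v w ∧ G.Adj w x ∧ G.Adj x u ∧ w ≠ u ∧ x ≠ v ∧
                  col s(w, x) = some c' ∧ (col s(v, w)).isSome ∧ col s(v, w) = col s(x, u) := by
                rcases hc' with ⟨w, hw | hw⟩ | h
                · exact absurd ⟨w, hw⟩ h1'
                · exact absurd ⟨w, hw⟩ h2'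
                · exact h
              rw [dif_neg h2', dif_pos h3'] at hfe
              obtain ⟨x, hx⟩ := h3.choose_spec
              obtain ⟨x', hx'⟩ := h3'.choose_spec
              have heq : h3.choose = h3'.choose := Sum.inr.inj hfe
              rw [heq] at hx
              obtain ⟨p, hp⟩ := Option.isSome_iff_exists.mp hx.2.2.2.2.2.2.1
              have hxu : col s(u, x) = some p := by
                rw [Sym2.eq_swap, ← hx.2.2.2.2.2.2.2]; exact hp
              have hxu' : col s(u, x') = some p := by
                rw [Sym2.eq_swap, ← hx'.2.2.2.2.2.2.2]
                exact hp
              have hxx : x = x' := by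
                by_contra hne
                exact hproper u x x' hx.2.2.1.symm hx'.2.2.1.symm hne p hxu hxu'
              rw [hxx] at hx
              exact Option.some.inj (hx.2.2.2.2.2.1.symm.trans hx'.2.2.2.2.2.1)
  refine hle.trans ?_
  have h1 : (Sum.inl '' (G.neighborSet u \ {v}) : Set (V ⊕ V)).ncard
      = (G.neighborSet u \ {v}).ncard := Set.ncard_image_of_injective _ Sum.inl_injective
  have h2 : (Sum.inr '' (G.neighborSet v \ {u}) : Set (V ⊕ V)).ncard
      = (G.neighborSet v \ {u}).ncard := Set.ncard_image_of_injective _ Sum.inr_injective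
  have hdu : (G.neighborSet u).ncard = G.degree u := by
    rw [Set.ncard_eq_toFinset_card']
    simp [SimpleGraph.neighborFinset, SimpleGraph.degree]
  have hdv : (G.neighborSet v).ncard = G.degree v := by
    rw [Set.ncard_eq_toFinset_card']
    simp [SimpleGraph.neighborFinset, SimpleGraph.degree]
  have hu1 : (G.neighborSet u \ {v}).ncard ≤ Δ - 1 := by
    rw [Set.ncard_diff_singleton_of_mem (show v ∈ G.neighborSet u from huv), hdu]
    exact Nat.sub_le_sub_right (hΔ u) 1
  have hv1 : (G.neighborSet v \ {u}).ncard ≤ Δ - 1 := by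
    rw [Set.ncard_diff_singleton_of_mem (show u ∈ G.neighborSet v from huv.symm), hdv]
    exact Nat.sub_le_sub_right (hΔ v) 1
  calc T.ncard ≤ (Sum.inl '' (G.neighborSet u \ {v}) : Set (V ⊕ V)).ncard
        + (Sum.inr '' (G.neighborSet v \ {u}) : Set (V ⊕ V)).ncard := Set.ncard_union_le _ _
    _ ≤ (Δ - 1) + (Δ - 1) := by rw [h1, h2]; exact Nat.add_le_add hu1 hv1
    _ = 2 * (Δ - 1) := by ring
end

section
/- If G is a d-degenerate graph with maximum degree Δ, then for every edge e of G and every even integer k ≥ 4, the number of cycles of length k in G containing e is at most 2·(4dΔ)^{(k−2)/2}. -/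
open Finset
namespace Stmt8
variable {V : Type*}

def ext (x : V) {n : ℕ} (g : Fin n → V) : ℕ → V := fun j =>
  if h : j - 1 < n then (if j = 0 then x else g ⟨j - 1, h⟩) else x

@[simp] lemma ext_zero (x : V) {n : ℕ} (g : Fin n → V) : ext x g 0 = x := by
  unfold ext; split_ifs <;> simp_all

lemma ext_succ (x : V) {n : ℕ} (g : Fin n → V) {i : ℕ} (h : i < n) :
    ext x g (i + 1) = g ⟨i, h⟩ := by
  unfold ext
  simp [h]

def Ok (G : SimpleGraph V) (x : V) {n : ℕ} (g : Fin n → V) : Prop :=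
  ∀ i < n, G.Adj (ext x g i) (ext x g (i + 1))

instance (G : SimpleGraph V) [DecidableRel G.Adj] (x : V) {n : ℕ} (g : Fin n → V) :
    Decidable (Ok G x g) := by unfold Ok; infer_instance

def asc (f : V → ℕ) (x : V) {n : ℕ} (g : Fin n → V) : ℕ :=
  ((Finset.range n).filter fun i => f (ext x g i) < f (ext x g (i + 1))).card

lemma asc_le (f : V → ℕ) (x : V) {n : ℕ} (g : Fin n → V) : asc f x g ≤ n := by
  classical
  exact (Finset.card_filter_le _ _).trans (by simp)

lemma ext_init (x : V) {n : ℕ} (g : Fin (n + 1) → V) {j : ℕ} (hj : j ≤ n) :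
    ext x (Fin.init g) j = ext x g j := by
  rcases Nat.eq_zero_or_pos j with rfl | hj0
  · simp
  · have h1 : j - 1 < n := by omega
    have h2 : j - 1 < n + 1 := by omega
    unfold ext
    rw [dif_pos h1, dif_pos h2, if_neg (by omega), if_neg (by omega)]
    simp [Fin.init]

lemma asc_init (f : V → ℕ) (x : V) {n : ℕ} (g : Fin (n + 1) → V) :
    asc f x (Fin.init g) =
      ((Finset.range n).filter fun i => f (ext x g i) < f (ext x g (i + 1))).card := by
  unfold asc
  congr 1
  apply Finset.filter_congr
  intro i hi
  rw [Finset.mem_range] at hi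
  rw [ext_init x g (by omega), ext_init x g (by omega)]

lemma asc_split (f : V → ℕ) (x : V) {n : ℕ} (g : Fin (n + 1) → V) :
    asc f x g = asc f x (Fin.init g) +
      (if f (ext x g n) < f (ext x g (n + 1)) then 1 else 0) := by
  rw [asc_init]
  unfold asc
  rw [Finset.range_add_one, Finset.filter_insert]
  split_ifs with h
  · rw [Finset.card_insert_of_notMem (by simp)]
  · simp

lemma Ok_init (G : SimpleGraph V) (x : V) {n : ℕ} {g : Fin (n + 1) → V}
    (hg : Ok G x g) : Ok G x (Fin.init g) := by
  intro i hi
  rw [ext_init x g (by omega), ext_init x g (by omega)]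
  exact hg i (by omega)

lemma asc_init_le (f : V → ℕ) (x : V) {n : ℕ} (g : Fin (n + 1) → V) :
    asc f x (Fin.init g) ≤ asc f x g := by
  rw [asc_split]; omega

/-- The key counting lemma. -/
lemma count [Fintype V] [DecidableEq V] (G : SimpleGraph V) [DecidableRel G.Adj]
    (f : V → ℕ) (hf : Function.Injective f) (d' Δ : ℕ)
    (hd : ∀ v : V, ((univ.filter fun u => G.Adj v u ∧ f u < f v).card ≤ d'))
    (hD : ∀ v : V, ((univ.filter fun u => G.Adj v u ∧ f v < f u).card ≤ Δ))
    (hdD : d' ≤ Δ) (x : V) :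
    ∀ n m : ℕ,
      ((univ : Finset (Fin n → V)).filter fun g => Ok G x g ∧ asc f x g ≤ min m n).card ≤
        2 ^ n * Δ ^ min m n * d' ^ (n - min m n) := by
  intro n
  induction n with
  | zero =>
    intro m
    simp only [Nat.min_zero, pow_zero, Nat.sub_zero, mul_one, one_mul]
    exact (Finset.card_filter_le _ _).trans (by simp)
  | succ n IH =>
    intro m
    set M := min m (n + 1) with hM
    have hMle : M ≤ n + 1 := min_le_right _ _
    clear_value M
    set s := (univ : Finset (Fin (n + 1) → V)).filter
      fun g => Ok G x g ∧ asc f x g ≤ M with hs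
    set t := (univ : Finset (Fin n → V)).filter
      fun h => Ok G x h ∧ asc f x h ≤ M with hts
    have ht_eq : t = (univ : Finset (Fin n → V)).filter
        fun h => Ok G x h ∧ asc f x h ≤ min M n := by
      rw [hts]
      apply Finset.filter_congr
      intro h _
      have := asc_le f x h
      constructor
      · rintro ⟨h1, h2⟩; exact ⟨h1, by omega⟩
      · rintro ⟨h1, h2⟩; exact ⟨h1, by omega⟩
    have hmem : ∀ g ∈ s, Fin.init g ∈ t := by
      intro g hg
      rw [hs, Finset.mem_filter] at hg
      rw [hts, Finset.mem_filter]
      exact ⟨Finset.mem_univ _, Ok_init G x hg.2.1,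
        le_trans (asc_init_le f x g) hg.2.2⟩
    have hcard : s.card = ∑ h ∈ t, (s.filter fun g => Fin.init g = h).card :=
      Finset.card_eq_sum_card_fiberwise hmem
    -- fiber bound
    have hfiber : ∀ h ∈ t, (s.filter fun g => Fin.init g = h).card ≤
        d' + (if asc f x h + 1 ≤ M then Δ else 0) := by
      intro h _
      set lv := ext x h n with hlv
      set D := (univ : Finset V).filter fun y => G.Adj lv y ∧ f y < f lv with hDs
      set U := (if asc f x h + 1 ≤ M then
        (univ : Finset V).filter (fun y => G.Adj lv y ∧ f lv < f y) else ∅) with hUs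
      have hsub : (s.filter fun g => Fin.init g = h).card ≤ (D ∪ U).card := by
        apply Finset.card_le_card_of_injOn (fun g => g (Fin.last n))
        · intro g hg
          rw [Finset.mem_coe, Finset.mem_filter] at hg
          rw [Finset.mem_coe]
          obtain ⟨hg1, hginit⟩ := hg
          rw [hs, Finset.mem_filter] at hg1
          obtain ⟨-, hok, hasc⟩ := hg1
          have hadj : G.Adj (ext x g n) (ext x g (n + 1)) := hok n (by omega)
          have hlv2 : ext x g n = lv := by
            rw [hlv, ← hginit, ext_init x g (le_refl n)]
          have hy : ext x g (n + 1) = g (Fin.last n) := by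
            rw [ext_succ x g (Nat.lt_succ_self n)]; rfl
          rw [hlv2, hy] at hadj
          have hne : f (g (Fin.last n)) ≠ f lv := fun hc => (G.ne_of_adj hadj).symm (hf hc)
          rcases Nat.lt_or_ge (f (g (Fin.last n))) (f lv) with hlt | hge
          · exact Finset.mem_union_left _ (by
              rw [hDs, Finset.mem_filter]
              exact ⟨Finset.mem_univ _, hadj, hlt⟩)
          · have hgt : f lv < f (g (Fin.last n)) := by omega
            have hasc2 : asc f x g = asc f x h + 1 := by
              rw [asc_split, hginit]
              rw [hlv2, hy, if_pos hgt]
            apply Finset.mem_union_right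
            rw [hUs, if_pos (by omega)]
            rw [Finset.mem_filter]
            exact ⟨Finset.mem_univ _, hadj, hgt⟩
        · intro g1 hg1 g2 hg2 heq
          simp only [Finset.coe_filter, Set.mem_setOf_eq] at hg1 hg2
          have e1 : Fin.snoc (Fin.init g1) (g1 (Fin.last n)) = g1 := Fin.snoc_init_self g1
          have e2 : Fin.snoc (Fin.init g2) (g2 (Fin.last n)) = g2 := Fin.snoc_init_self g2
          rw [← e1, ← e2, hg1.2, hg2.2]
          exact congrArg _ heq
      refine hsub.trans ((Finset.card_union_le _ _).trans ?_)
      gcongr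
      · exact hd lv
      · rw [hUs]
        split_ifs with hc
        · exact hD lv
        · exact le_of_eq Finset.card_empty
    -- sum it up
    have hsum : s.card ≤ d' * t.card +
        Δ * (t.filter fun h => asc f x h + 1 ≤ M).card := by
      rw [hcard]
      calc ∑ h ∈ t, (s.filter fun g => Fin.init g = h).card
          ≤ ∑ h ∈ t, (d' + (if asc f x h + 1 ≤ M then Δ else 0)) :=
            Finset.sum_le_sum hfiber
        _ = d' * t.card + Δ * (t.filter fun h => asc f x h + 1 ≤ M).card := by
            rw [Finset.sum_add_distrib, Finset.sum_const, Finset.sum_ite,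
              Finset.sum_const, Finset.sum_const_zero]
            simp [mul_comm]
    have htcard : t.card ≤ 2 ^ n * Δ ^ min M n * d' ^ (n - min M n) := by
      rw [ht_eq]; exact IH M
    by_cases hM0 : M = 0
    · -- no ascents allowed
      have h2 : (t.filter fun h => asc f x h + 1 ≤ M).card = 0 := by
        rw [Finset.card_eq_zero]
        apply Finset.filter_false_of_mem
        intro h _
        omega
      subst hM0
      simp only [Nat.zero_min, Nat.min_zero, pow_zero, mul_one, Nat.sub_zero, one_mul] at htcard ⊢
      rw [h2] at hsum
      calc s.card ≤ d' * t.card + Δ * 0 := hsum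
        _ ≤ d' * (2 ^ n * d' ^ n) + 0 := by gcongr <;> simpa using htcard
        _ = 2 ^ n * d' ^ (n + 1) := by rw [pow_succ]; ring
        _ ≤ 2 ^ (n + 1) * d' ^ (n + 1) := by
            have : (2:ℕ) ^ n ≤ 2 ^ (n + 1) := Nat.pow_le_pow_right (by norm_num) (by omega)
            exact Nat.mul_le_mul_right _ this
    · obtain ⟨M', rfl⟩ : ∃ M', M = M' + 1 := ⟨M - 1, by omega⟩
      have hM'n : M' ≤ n := by omega
      have h2 : (t.filter fun h => asc f x h + 1 ≤ M' + 1).card ≤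
          2 ^ n * Δ ^ M' * d' ^ (n - M') := by
        have hsub2 : (t.filter fun h => asc f x h + 1 ≤ M' + 1) ⊆
            (univ : Finset (Fin n → V)).filter
              fun h => Ok G x h ∧ asc f x h ≤ min M' n := by
          intro h hh
          simp only [hts, Finset.mem_filter, Finset.mem_univ, true_and] at hh ⊢
          have := asc_le f x h
          exact ⟨hh.1.1, by omega⟩
        calc (t.filter fun h => asc f x h + 1 ≤ M' + 1).card
            ≤ _ := Finset.card_le_card hsub2
          _ ≤ 2 ^ n * Δ ^ min M' n * d' ^ (n - min M' n) := IH M'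
          _ = 2 ^ n * Δ ^ M' * d' ^ (n - M') := by rw [min_eq_left hM'n]
      by_cases hMn : M' + 1 ≤ n
      · have hmin : min (M' + 1) n = M' + 1 := min_eq_left hMn
        rw [hmin] at htcard
        calc s.card ≤ d' * t.card + Δ * (t.filter fun h => asc f x h + 1 ≤ M' + 1).card := hsum
          _ ≤ d' * (2 ^ n * Δ ^ (M' + 1) * d' ^ (n - (M' + 1))) +
              Δ * (2 ^ n * Δ ^ M' * d' ^ (n - M')) := by gcongr
          _ = 2 ^ (n + 1) * Δ ^ (M' + 1) * d' ^ (n + 1 - (M' + 1)) := by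
              have e1 : n - M' = n - (M' + 1) + 1 := by omega
              have e2 : n + 1 - (M' + 1) = n - (M' + 1) + 1 := by omega
              rw [e1, e2, pow_succ, pow_succ, pow_succ]
              ring
      · have hMeq : M' + 1 = n + 1 := by omega
        have hM'eq : M' = n := by omega
        have hmin : min (M' + 1) n = n := by omega
        rw [hmin] at htcard
        calc s.card ≤ d' * t.card + Δ * (t.filter fun h => asc f x h + 1 ≤ M' + 1).card := hsum
          _ ≤ d' * (2 ^ n * Δ ^ n * d' ^ (n - n)) +
              Δ * (2 ^ n * Δ ^ M' * d' ^ (n - M')) := by gcongr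
          _ ≤ Δ * (2 ^ n * Δ ^ n * 1) + Δ * (2 ^ n * Δ ^ n * 1) := by
              rw [hM'eq]
              simp only [Nat.sub_self, pow_zero]
              gcongr
          _ = 2 ^ (n + 1) * Δ ^ (M' + 1) * d' ^ (n + 1 - (M' + 1)) := by
              rw [hM'eq]
              simp only [Nat.sub_self, pow_zero, mul_one]
              rw [pow_succ, pow_succ]
              ring


/-- Construction of a degeneracy ordering. -/
lemma exists_order [Fintype V] [DecidableEq V] (G : SimpleGraph V) [DecidableRel G.Adj]
    (d : ℕ)
    (hdeg : ∀ s : Finset V, s.Nonempty → ∃ v ∈ s, (s.filter fun u => G.Adj v u).card ≤ d) :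
    ∃ f : V → ℕ, Function.Injective f ∧
      ∀ v : V, ((univ.filter fun u => G.Adj v u ∧ f u < f v).card ≤ d) := by
  have key : ∀ s : Finset V, ∃ f : V → ℕ, Set.InjOn f ↑s ∧
      ∀ v ∈ s, ((s.filter fun u => G.Adj v u ∧ f u < f v).card ≤ d) := by
    intro s
    induction s using Finset.strongInduction with
    | _ s ih =>
      rcases s.eq_empty_or_nonempty with rfl | hne
      · exact ⟨fun _ => 0, by simp, by simp⟩
      · obtain ⟨v, hv, hvd⟩ := hdeg s hne
        obtain ⟨f, hfi, hfd⟩ := ih (s.erase v) (Finset.erase_ssubset hv)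
        set M := (s.erase v).sup f with hM
        refine ⟨Function.update f v (M + 1), ?_, ?_⟩
        · intro u1 h1 u2 h2 heq
          by_cases e1 : u1 = v <;> by_cases e2 : u2 = v
          · rw [e1, e2]
          · exfalso
            rw [e1, Function.update_self, Function.update_of_ne e2] at heq
            have : f u2 ≤ M := Finset.le_sup (Finset.mem_erase.2 ⟨e2, h2⟩)
            omega
          · exfalso
            rw [e2, Function.update_self, Function.update_of_ne e1] at heq
            have : f u1 ≤ M := Finset.le_sup (Finset.mem_erase.2 ⟨e1, h1⟩)
            omega
          · rw [Function.update_of_ne e1, Function.update_of_ne e2] at heq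
            exact hfi (Finset.mem_coe.2 (Finset.mem_erase.2 ⟨e1, h1⟩))
              (Finset.mem_coe.2 (Finset.mem_erase.2 ⟨e2, h2⟩)) heq
        · intro w hw
          by_cases hwv : w = v
          · subst hwv
            refine le_trans (Finset.card_le_card ?_) hvd
            intro u hu
            rw [Finset.mem_filter] at hu ⊢
            exact ⟨hu.1, hu.2.1⟩
          · have hwM : f w ≤ M := Finset.le_sup (Finset.mem_erase.2 ⟨hwv, hw⟩)
            have : (s.filter fun u => G.Adj w u ∧
                Function.update f v (M + 1) u < Function.update f v (M + 1) w) =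
                ((s.erase v).filter fun u => G.Adj w u ∧ f u < f w) := by
              ext u
              simp only [Finset.mem_filter, Finset.mem_erase]
              constructor
              · rintro ⟨hus, hadj, hlt⟩
                have huv : u ≠ v := by
                  rintro rfl
                  rw [Function.update_self, Function.update_of_ne hwv] at hlt
                  omega
                rw [Function.update_of_ne huv, Function.update_of_ne hwv] at hlt
                exact ⟨⟨huv, hus⟩, hadj, hlt⟩
              · rintro ⟨⟨huv, hus⟩, hadj, hlt⟩
                rw [Function.update_of_ne huv, Function.update_of_ne hwv]
                exact ⟨hus, hadj, hlt⟩
            rw [this]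
            exact hfd w (Finset.mem_erase.2 ⟨hwv, hw⟩)
  obtain ⟨f, hfi, hfd⟩ := key Finset.univ
  refine ⟨f, fun u1 u2 h => hfi (by simp) (by simp) h, fun v => ?_⟩
  simpa using hfd v (Finset.mem_univ v)

/-- ascents forward plus ascents backward is at most `n + 1`. -/
lemma asc_rev_sum (f : V → ℕ) (a b : V) {n : ℕ} (hn : 1 ≤ n) (g : Fin n → V) :
    asc f b g + asc f a (g ∘ Fin.rev) ≤ n + 1 := by
  classical
  have hsplit : ∀ (x : V) (h : Fin n → V),
      asc f x h ≤ 1 + ((Finset.Ico 1 n).filter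
        fun i => f (ext x h i) < f (ext x h (i + 1))).card := by
    intro x h
    unfold asc
    have : Finset.range n = Finset.Ico 0 1 ∪ Finset.Ico 1 n := by
      rw [Finset.range_eq_Ico, Finset.Ico_union_Ico_eq_Ico (by omega) (by omega)]
    rw [this, Finset.filter_union]
    refine le_trans (Finset.card_union_le _ _) ?_
    gcongr
    exact le_trans (Finset.card_filter_le _ _) (by simp)
  set P := (Finset.Ico 1 n).filter
    (fun i => f (ext b g i) < f (ext b g (i + 1))) with hP
  set Q := (Finset.Ico 1 n).filter
    (fun i => f (ext a (g ∘ Fin.rev) i) < f (ext a (g ∘ Fin.rev) (i + 1))) with hQ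
  have key : ∀ i, 1 ≤ i → i ≤ n → ext a (g ∘ Fin.rev) i = ext b g (n + 1 - i) := by
    intro i h1 h2
    obtain ⟨j, rfl⟩ : ∃ j, i = j + 1 := ⟨i - 1, by omega⟩
    obtain ⟨m, hm⟩ : ∃ m, n + 1 - (j + 1) = m + 1 := ⟨n - 1 - j, by omega⟩
    rw [ext_succ a (g ∘ Fin.rev) (by omega), hm, ext_succ b g (i := m) (by omega)]
    show g (Fin.rev _) = g _
    apply congrArg
    apply Fin.ext
    rw [Fin.val_rev]
    simp only []
    omega
  have hdisj : Disjoint Q (P.image fun i => n - i) := by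
    rw [Finset.disjoint_left]
    intro i hiQ hiP
    rw [Finset.mem_image] at hiP
    obtain ⟨j, hjP, hji⟩ := hiP
    rw [hP, Finset.mem_filter, Finset.mem_Ico] at hjP
    rw [hQ, Finset.mem_filter, Finset.mem_Ico] at hiQ
    have hA : n + 1 - i = j + 1 := by omega
    have hB : n + 1 - (i + 1) = j := by omega
    have h2 := hiQ.2
    rw [key i (by omega) (by omega), key (i + 1) (by omega) (by omega), hA, hB] at h2
    exact absurd hjP.2 (by omega)
  have hinj : Set.InjOn (fun i => n - i) ↑P := by
    intro i hi j hj hij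
    simp only [hP, Finset.coe_filter, Set.mem_setOf_eq, Finset.mem_Ico] at hi hj
    simp only at hij
    omega
  have hPQcard : Q.card + P.card ≤ n - 1 := by
    have himg : (P.image fun i => n - i).card = P.card := Finset.card_image_of_injOn hinj
    have hsub : Q ∪ P.image (fun i => n - i) ⊆ Finset.Ico 1 n := by
      apply Finset.union_subset
      · rw [hQ]; exact Finset.filter_subset _ _
      · intro i hi
        rw [Finset.mem_image] at hi
        obtain ⟨j, hj, rfl⟩ := hi
        rw [hP, Finset.mem_filter, Finset.mem_Ico] at hj
        rw [Finset.mem_Ico]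
        omega
    calc Q.card + P.card = (Q ∪ P.image fun i => n - i).card := by
          rw [Finset.card_union_of_disjoint hdisj, himg]
      _ ≤ (Finset.Ico 1 n).card := Finset.card_le_card hsub
      _ = n - 1 := by simp
  have h1 := hsplit b g
  have h2 := hsplit a (g ∘ Fin.rev)
  rw [← hP] at h1
  rw [← hQ] at h2
  omega

/-! ### Walk lemmas -/

lemma mem_edges_iff {G : SimpleGraph V} {u v : V} (p : G.Walk u v) (x : Sym2 V) :
    x ∈ p.edges ↔ ∃ i < p.length, x = s(p.getVert i, p.getVert (i + 1)) := by
  induction p with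
  | nil => simp
  | @cons u' v' w' h q IH =>
    simp only [SimpleGraph.Walk.edges_cons, List.mem_cons, SimpleGraph.Walk.length_cons]
    constructor
    · rintro (rfl | hx)
      · exact ⟨0, by omega, by simp [SimpleGraph.Walk.getVert_zero,
          SimpleGraph.Walk.getVert_cons_succ]⟩
      · obtain ⟨i, hi, hxi⟩ := IH.1 hx
        exact ⟨i + 1, by omega, by
          simpa [SimpleGraph.Walk.getVert_cons_succ] using hxi⟩
    · rintro ⟨i, hi, hxi⟩
      rcases i with - | j
      · left
        simpa [SimpleGraph.Walk.getVert_zero, SimpleGraph.Walk.getVert_cons_succ] using hxi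
      · right
        refine IH.2 ⟨j, by omega, ?_⟩
        simpa [SimpleGraph.Walk.getVert_cons_succ] using hxi

lemma getVert_mem_support {G : SimpleGraph V} {u v : V} (p : G.Walk u v) (i : ℕ) :
    p.getVert i ∈ p.support := by
  rcases Nat.lt_or_ge i p.length with h | h
  · exact SimpleGraph.Walk.mem_support_iff_exists_getVert.2 ⟨i, rfl, by omega⟩
  · rw [SimpleGraph.Walk.getVert_of_length_le p h]
    exact SimpleGraph.Walk.end_mem_support p

lemma getVert_inj {G : SimpleGraph V} {u v : V} (p : G.Walk u v)
    (hnd : p.support.Nodup) :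
    ∀ i j, i ≤ p.length → j ≤ p.length → p.getVert i = p.getVert j → i = j := by
  induction p with
  | nil => intro i j hi hj _; simp at hi hj; omega
  | @cons u' v' w' h q IH =>
    rw [SimpleGraph.Walk.support_cons, List.nodup_cons] at hnd
    intro i j hi hj hij
    rw [SimpleGraph.Walk.length_cons] at hi hj
    rcases i with - | i' <;> rcases j with - | j'
    · rfl
    · exfalso
      rw [SimpleGraph.Walk.getVert_zero, SimpleGraph.Walk.getVert_cons_succ] at hij
      exact hnd.1 (hij ▸ getVert_mem_support q j')
    · exfalso
      rw [SimpleGraph.Walk.getVert_zero, SimpleGraph.Walk.getVert_cons_succ] at hij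
      exact hnd.1 (hij ▸ getVert_mem_support q i')
    · rw [SimpleGraph.Walk.getVert_cons_succ, SimpleGraph.Walk.getVert_cons_succ] at hij
      have := IH hnd.2 i' j' (by omega) (by omega) hij
      omega

lemma getVert_inj_tail {G : SimpleGraph V} {u : V} (p : G.Walk u u)
    (hnd : p.support.tail.Nodup) :
    ∀ i j, 1 ≤ i → i ≤ p.length → 1 ≤ j → j ≤ p.length → p.getVert i = p.getVert j →
      i = j := by
  cases p with
  | nil => intro i j h1 h2 _ _ _; simp at h2; omega
  | cons h q =>
    rw [SimpleGraph.Walk.support_cons, List.tail_cons] at hnd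
    intro i j h1 h2 h3 h4 hij
    rw [SimpleGraph.Walk.length_cons] at h2 h4
    rw [SimpleGraph.Walk.getVert_cons q h (by omega),
      SimpleGraph.Walk.getVert_cons q h (by omega)] at hij
    have := getVert_inj q hnd (i - 1) (j - 1) (by omega) (by omega) hij
    omega

lemma cycle_normalize {G : SimpleGraph V} [DecidableEq V] {a b : V} {k : ℕ} (hk3 : 3 ≤ k)
    {u : V} (w : G.Walk u u) (hw : w.IsCycle) (hl : w.length = k)
    (he : s(a, b) ∈ w.edges) :
    ∃ p : G.Walk a a, p.length = k ∧ p.getVert 1 = b ∧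
      p.edges.toFinset = w.edges.toFinset := by
  have ha : a ∈ w.support := SimpleGraph.Walk.fst_mem_support_of_mem_edges w he
  set p₀ := w.rotate a ha with hp₀
  have hperm : p₀.edges.Perm w.edges := (w.rotate_edges a ha).perm
  have hlen : p₀.length = k := by
    have h1 : p₀.edges.length = p₀.length := SimpleGraph.Walk.length_edges p₀
    have h2 : w.edges.length = w.length := SimpleGraph.Walk.length_edges w
    have := hperm.length_eq
    omega
  have hcyc : p₀.IsCycle := hw.rotate ha
  have hnd : p₀.support.tail.Nodup := hcyc.2
  have he0 : s(a, b) ∈ p₀.edges := hperm.mem_iff.2 he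
  obtain ⟨i, hi, hsym⟩ := (mem_edges_iff p₀ _).1 he0
  rw [hlen] at hi
  have hgk : p₀.getVert k = a := by
    rw [← hlen]; exact SimpleGraph.Walk.getVert_length p₀
  rw [Sym2.eq_iff] at hsym
  rcases hsym with ⟨hA, hB⟩ | ⟨hA, hB⟩
  · -- a = getVert i, b = getVert (i+1) : i = 0
    have hi0 : i = 0 := by
      by_contra hne
      have : i = k := getVert_inj_tail p₀ hnd i k (by omega) (by omega) (by omega)
        (by omega) (by rw [← hA, hgk])
      omega
    subst hi0
    exact ⟨p₀, hlen, by simpa using hB.symm,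
      List.toFinset_eq_of_perm _ _ hperm⟩
  · -- a = getVert (i+1), b = getVert i : i + 1 = k
    have hik : i + 1 = k := getVert_inj_tail p₀ hnd (i + 1) k (by omega) (by omega)
      (by omega) (by omega) (by rw [← hA, hgk])
    refine ⟨p₀.reverse, ?_, ?_, ?_⟩
    · rw [SimpleGraph.Walk.length_reverse]; exact hlen
    · rw [SimpleGraph.Walk.getVert_reverse, hlen]
      have : k - 1 = i := by omega
      rw [this, ← hB]
    · rw [SimpleGraph.Walk.edges_reverse, List.toFinset_reverse]
      exact List.toFinset_eq_of_perm _ _ hperm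

end Stmt8

/-- In a `d`-degenerate graph of maximum degree `Δ`, for every edge `e` and every even
`k ≥ 4`, the number of `k`-cycles containing `e` (counted as edge sets) is at most
`2 (4dΔ)^{(k-2)/2}`. -/
theorem stmt_8 {V : Type*} [Fintype V] [DecidableEq V]
    (G : SimpleGraph V) [DecidableRel G.Adj]
    (d Δ : ℕ) (hΔ : ∀ v, G.degree v ≤ Δ)
    (hdeg : ∀ s : Finset V, s.Nonempty → ∃ v ∈ s, (s.filter fun u => G.Adj v u).card ≤ d)
    (e : Sym2 V) (he : e ∈ G.edgeSet)
    (k : ℕ) (hk : 4 ≤ k) (hke : Even k) :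
    {s : Finset (Sym2 V) | ∃ (u : V) (w : G.Walk u u), w.IsCycle ∧ w.length = k ∧
        e ∈ w.edges ∧ s = w.edges.toFinset}.ncard ≤ 2 * (4 * d * Δ) ^ ((k - 2) / 2) := by
  classical
  induction e using Sym2.ind with
  | _ a b =>
  obtain ⟨f, hfinj, hford⟩ := Stmt8.exists_order G d hdeg
  set t := k - 2 with ht
  have htk : k = t + 2 := by omega
  have hte : Even t := by rcases hke with ⟨r, hr⟩; exact ⟨r - 1, by omega⟩
  have ht2 : 2 ≤ t := by omega
  have htt : t / 2 * 2 = t := Nat.div_mul_cancel hte.two_dvd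
  set d' := min d Δ with hd'
  have hdmin : ∀ v, ((Finset.univ.filter fun u => G.Adj v u ∧ f u < f v).card ≤ d') := by
    intro v
    refine le_min (hford v) ?_
    refine le_trans (Finset.card_le_card ?_) (le_trans
      (le_of_eq (G.card_neighborFinset_eq_degree v)) (hΔ v))
    intro u hu
    rw [Finset.mem_filter] at hu
    rw [SimpleGraph.mem_neighborFinset]
    exact hu.2.1
  have hDmax : ∀ v, ((Finset.univ.filter fun u => G.Adj v u ∧ f v < f u).card ≤ Δ) := by
    intro v
    refine le_trans (Finset.card_le_card ?_) (le_trans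
      (le_of_eq (G.card_neighborFinset_eq_degree v)) (hΔ v))
    intro u hu
    rw [Finset.mem_filter] at hu
    rw [SimpleGraph.mem_neighborFinset]
    exact hu.2.1
  -- the cyclic vertex sequence associated to a choice of middle vertices
  set q : (Fin t → V) → ℕ → V := fun c j =>
    if j = 0 then a else if j = 1 then b else
      if h : j - 2 < t then c ⟨j - 2, h⟩ else a with hq
  set Good : (Fin t → V) → Prop := fun c => ∀ j < k, G.Adj (q c j) (q c (j + 1)) with hGood
  set EdgesOf : (Fin t → V) → Finset (Sym2 V) := fun c =>
    (Finset.range k).image fun j => s(q c j, q c (j + 1)) with hE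
  -- bridging lemmas between ext and q
  have hbq : ∀ (c : Fin t → V) (i : ℕ), i ≤ t → Stmt8.ext b c i = q c (i + 1) := by
    intro c i hi
    rcases Nat.eq_zero_or_pos i with rfl | hpos
    · rw [Stmt8.ext_zero]
      simp [hq]
    · obtain ⟨j, rfl⟩ : ∃ j, i = j + 1 := ⟨i - 1, by omega⟩
      rw [Stmt8.ext_succ b c (by omega : j < t)]
      simp only [hq]
      rw [if_neg (show ¬(j + 1 + 1 = 0) by omega), if_neg (show ¬(j + 1 + 1 = 1) by omega),
        dif_pos (show j + 1 + 1 - 2 < t by omega)]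
      exact congrArg c (Fin.ext (show j = j + 1 + 1 - 2 by omega))
  have haq : ∀ (c : Fin t → V) (i : ℕ), i ≤ t →
      Stmt8.ext a (c ∘ Fin.rev) i = q c (t + 2 - i) := by
    intro c i hi
    rcases Nat.eq_zero_or_pos i with rfl | hpos
    · rw [Stmt8.ext_zero]
      simp only [hq]
      rw [if_neg (show ¬(t + 2 - 0 = 0) by omega), if_neg (show ¬(t + 2 - 0 = 1) by omega),
        dif_neg (show ¬(t + 2 - 0 - 2 < t) by omega)]
    · obtain ⟨j, rfl⟩ : ∃ j, i = j + 1 := ⟨i - 1, by omega⟩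
      rw [Stmt8.ext_succ a (c ∘ Fin.rev) (by omega : j < t)]
      simp only [hq, Function.comp_apply]
      rw [if_neg (show ¬(t + 2 - (j + 1) = 0) by omega),
        if_neg (show ¬(t + 2 - (j + 1) = 1) by omega),
        dif_pos (show t + 2 - (j + 1) - 2 < t by omega)]
      apply congrArg
      apply Fin.ext
      rw [Fin.val_rev]
      simp only []
      omega
  -- claim 1 : every cycle edge set is EdgesOf of a Good function
  have claim1 : ∀ s : Finset (Sym2 V),
      (∃ (u : V) (w : G.Walk u u), w.IsCycle ∧ w.length = k ∧
        s(a, b) ∈ w.edges ∧ s = w.edges.toFinset) →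
      ∃ c : Fin t → V, Good c ∧ s = EdgesOf c := by
    rintro s ⟨u, w, hcyc, hlen, hew, rfl⟩
    obtain ⟨p, hp1, hp2, hp3⟩ := Stmt8.cycle_normalize (by omega) w hcyc hlen hew
    set c : Fin t → V := fun i => p.getVert ((i : ℕ) + 2) with hc
    have hqp : ∀ j, j ≤ k → q c j = p.getVert j := by
      intro j hj
      simp only [hq]
      by_cases h0 : j = 0
      · subst h0
        rw [if_pos rfl, SimpleGraph.Walk.getVert_zero]
      by_cases h1 : j = 1
      · subst h1
        rw [if_neg (by omega), if_pos rfl, hp2]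
      rw [if_neg h0, if_neg h1]
      by_cases h2 : j - 2 < t
      · rw [dif_pos h2, hc]
        show p.getVert ((j - 2) + 2) = p.getVert j
        exact congrArg p.getVert (by omega)
      · rw [dif_neg h2]
        have hjk : j = k := by omega
        rw [hjk, ← hp1, SimpleGraph.Walk.getVert_length]
    refine ⟨c, ?_, ?_⟩
    · intro j hj
      rw [hqp j (by omega), hqp (j + 1) (by omega)]
      exact p.adj_getVert_succ (by omega)
    · rw [← hp3, hE]
      ext x
      rw [List.mem_toFinset, Stmt8.mem_edges_iff p x]
      simp only [Finset.mem_image, Finset.mem_range]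
      constructor
      · rintro ⟨i, hi, rfl⟩
        rw [hp1] at hi
        exact ⟨i, hi, by rw [hqp i (by omega), hqp (i + 1) (by omega)]⟩
      · rintro ⟨i, hi, rfl⟩
        exact ⟨i, by omega, by rw [hqp i (by omega), hqp (i + 1) (by omega)]⟩
  -- Good functions give valid walks from both directions
  have hOkb : ∀ c : Fin t → V, Good c → Stmt8.Ok G b c := by
    intro c hGc i hi
    rw [hbq c i (by omega), hbq c (i + 1) (by omega)]
    exact hGc (i + 1) (by omega)
  have hOka : ∀ c : Fin t → V, Good c → Stmt8.Ok G a (c ∘ Fin.rev) := by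
    intro c hGc i hi
    rw [haq c i (by omega), haq c (i + 1) (by omega),
      show t + 2 - (i + 1) = t + 1 - i by omega,
      show t + 2 - i = (t + 1 - i) + 1 by omega]
    exact (hGc (t + 1 - i) (by omega)).symm
  -- the encoding
  set enc : Finset (Sym2 V) → Bool × (Fin t → V) := fun s =>
    if h : ∃ c : Fin t → V, Good c ∧ s = EdgesOf c then
      (if Stmt8.asc f b h.choose ≤ t / 2 then ((false : Bool), h.choose)
       else ((true : Bool), h.choose ∘ Fin.rev))
    else ((false : Bool), fun _ => a) with henc
  set T : Finset (Bool × (Fin t → V)) := Finset.univ.filter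
    (fun pr => Stmt8.Ok G (cond pr.1 a b) pr.2 ∧
      Stmt8.asc f (cond pr.1 a b) pr.2 ≤ t / 2) with hT
  have hmem : ∀ s ∈ {s : Finset (Sym2 V) | ∃ (u : V) (w : G.Walk u u),
      w.IsCycle ∧ w.length = k ∧ s(a, b) ∈ w.edges ∧ s = w.edges.toFinset},
      enc s ∈ (T : Set (Bool × (Fin t → V))) := by
    intro s hs
    have hex : ∃ c : Fin t → V, Good c ∧ s = EdgesOf c := claim1 s hs
    have hGc : Good hex.choose := hex.choose_spec.1
    rw [henc]
    simp only [dif_pos hex]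
    rw [Finset.mem_coe, hT]
    by_cases hle : Stmt8.asc f b hex.choose ≤ t / 2
    · rw [if_pos hle]
      rw [Finset.mem_filter]
      exact ⟨Finset.mem_univ _, hOkb _ hGc, hle⟩
    · rw [if_neg hle]
      rw [Finset.mem_filter]
      refine ⟨Finset.mem_univ _, hOka _ hGc, ?_⟩
      have hsum := Stmt8.asc_rev_sum f a b (by omega : 1 ≤ t) hex.choose
      simp only [cond_true]
      omega
  have hinj : Set.InjOn enc {s : Finset (Sym2 V) | ∃ (u : V) (w : G.Walk u u),
      w.IsCycle ∧ w.length = k ∧ s(a, b) ∈ w.edges ∧ s = w.edges.toFinset} := by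
    intro s1 hs1 s2 hs2 heq
    have hex1 : ∃ c : Fin t → V, Good c ∧ s1 = EdgesOf c := claim1 s1 hs1
    have hex2 : ∃ c : Fin t → V, Good c ∧ s2 = EdgesOf c := claim1 s2 hs2
    rw [henc] at heq
    simp only [dif_pos hex1, dif_pos hex2] at heq
    have hc12 : hex1.choose = hex2.choose := by
      by_cases h1 : Stmt8.asc f b hex1.choose ≤ t / 2 <;>
        by_cases h2 : Stmt8.asc f b hex2.choose ≤ t / 2
      · rw [if_pos h1, if_pos h2] at heq
        exact congrArg Prod.snd heq
      · rw [if_pos h1, if_neg h2] at heq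
        exact absurd (congrArg Prod.fst heq) (by simp)
      · rw [if_neg h1, if_pos h2] at heq
        exact absurd (congrArg Prod.fst heq) (by simp)
      · rw [if_neg h1, if_neg h2] at heq
        have h3 : hex1.choose ∘ Fin.rev = hex2.choose ∘ Fin.rev :=
          congrArg Prod.snd heq
        funext i
        have := congrFun h3 (Fin.rev i)
        simpa [Fin.rev_rev] using this
    rw [hex1.choose_spec.2, hex2.choose_spec.2, hc12]
  have hSle : {s : Finset (Sym2 V) | ∃ (u : V) (w : G.Walk u u),
      w.IsCycle ∧ w.length = k ∧ s(a, b) ∈ w.edges ∧ s = w.edges.toFinset}.ncard ≤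
      T.card := by
    rw [← Set.ncard_coe_finset T]
    exact Set.ncard_le_ncard_of_injOn enc hmem hinj (Finset.finite_toSet T)
  -- bound T.card
  have hhalf : min (t / 2) t = t / 2 := min_eq_left (by omega)
  have hcount : ∀ x : V, ((Finset.univ : Finset (Fin t → V)).filter
      (fun g => Stmt8.Ok G x g ∧ Stmt8.asc f x g ≤ t / 2)).card ≤
      2 ^ t * Δ ^ (t / 2) * d' ^ (t / 2) := by
    intro x
    have := Stmt8.count G f hfinj d' Δ hdmin hDmax (min_le_right d Δ) x t (t / 2)
    rw [hhalf] at this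
    have ht5 : t - t / 2 = t / 2 := by omega
    rw [ht5] at this
    exact this
  have hTb : T.card ≤ 2 * (2 ^ t * Δ ^ (t / 2) * d' ^ (t / 2)) := by
    have hsplit : T = T.filter (fun pr => pr.1 = false) ∪
        T.filter (fun pr => ¬ pr.1 = false) := (Finset.filter_union_filter_not_eq _ T).symm
    rw [hsplit]
    refine le_trans (Finset.card_union_le _ _) ?_
    have hb1 : (T.filter (fun pr => pr.1 = false)).card ≤
        2 ^ t * Δ ^ (t / 2) * d' ^ (t / 2) := by
      refine le_trans (Finset.card_le_card_of_injOn Prod.snd ?_ ?_) (hcount b)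
      · intro pr hpr
        rw [Finset.mem_coe, Finset.mem_filter, hT, Finset.mem_filter] at hpr
        obtain ⟨⟨-, h1, h2⟩, h3⟩ := hpr
        rw [Finset.mem_coe, Finset.mem_filter]
        rw [h3] at h1 h2
        exact ⟨Finset.mem_univ _, h1, h2⟩
      · intro p1 hp1 p2 hp2 hss
        simp only [Finset.coe_filter, Set.mem_setOf_eq] at hp1 hp2
        exact Prod.ext (by rw [hp1.2, hp2.2]) hss
    have hb2 : (T.filter (fun pr => ¬ pr.1 = false)).card ≤
        2 ^ t * Δ ^ (t / 2) * d' ^ (t / 2) := by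
      refine le_trans (Finset.card_le_card_of_injOn Prod.snd ?_ ?_) (hcount a)
      · intro pr hpr
        rw [Finset.mem_coe, Finset.mem_filter, hT, Finset.mem_filter] at hpr
        obtain ⟨⟨-, h1, h2⟩, h3⟩ := hpr
        have h4 : pr.1 = true := by
          cases h : pr.1
          · exact absurd h h3
          · rfl
        rw [Finset.mem_coe, Finset.mem_filter]
        rw [h4] at h1 h2
        exact ⟨Finset.mem_univ _, h1, h2⟩
      · intro p1 hp1 p2 hp2 hss
        simp only [Finset.coe_filter, Set.mem_setOf_eq] at hp1 hp2
        have h4 : p1.1 = true := by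
          cases h : p1.1
          · exact absurd h hp1.2
          · rfl
        have h5 : p2.1 = true := by
          cases h : p2.1
          · exact absurd h hp2.2
          · rfl
        exact Prod.ext (by rw [h4, h5]) hss
    omega
  -- final arithmetic
  have harith : 2 * (2 ^ t * Δ ^ (t / 2) * d' ^ (t / 2)) ≤ 2 * (4 * d * Δ) ^ (t / 2) := by
    have h4 : (4 * d * Δ) ^ (t / 2) = 4 ^ (t / 2) * d ^ (t / 2) * Δ ^ (t / 2) := by
      rw [mul_pow, mul_pow]
    have h2t : (4 : ℕ) ^ (t / 2) = 2 ^ t := by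
      have : (4 : ℕ) = 2 ^ 2 := by norm_num
      rw [this, ← pow_mul]
      congr 1
      omega
    have hdd : d' ^ (t / 2) ≤ d ^ (t / 2) := Nat.pow_le_pow_left (min_le_left d Δ) _
    calc 2 * (2 ^ t * Δ ^ (t / 2) * d' ^ (t / 2))
        ≤ 2 * (2 ^ t * Δ ^ (t / 2) * d ^ (t / 2)) := by
          apply Nat.mul_le_mul_left
          apply Nat.mul_le_mul_left
          exact hdd
      _ = 2 * (4 * d * Δ) ^ (t / 2) := by rw [h4, h2t]; ring
  have hfinal : (k - 2) / 2 = t / 2 := by rw [← ht]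
  rw [hfinal]
  exact le_trans hSle (le_trans hTb harith)
end

section
/- Suppose the initial state is distributed as μ and (D,ρ) regenerate μ at every flaw. Then for any fixed sequence of flaws w_1,...,w_t, the probability that the algorithm's first t addressed flaws are exactly w_1,...,w_t is at most Π_{i=1}^t μ(w_i). -/
/-!
Forgetting that the history-dependent rule must actually pick `w_k` only enlarges a sum of
nonnegative terms. What remains factorises: regeneration says exactly that `μ` is a left
eigenvector, with eigenvalue `μ(f)`, of the kernel `ρ_f` cut down to the states of `f`, so
summing out the states of a trajectory one at a time, from the initial one on, produces one
factor `μ(w_k)` per step.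
-/

theorem sum_mul_prod_eq_of_left_eigenvector {R Ω : Type*} [CommSemiring R] [Fintype Ω]
    (μ : Ω → R) {t : ℕ} (P : Fin t → Ω → Ω → R) (c : Fin t → R)
    (hP : ∀ k τ, ∑ σ, μ σ * P k σ τ = c k * μ τ) :
    ∑ traj : Fin (t + 1) → Ω, μ (traj 0) * ∏ k, P k (traj k.castSucc) (traj k.succ) =
      (∑ σ, μ σ) * ∏ k, c k := by
  induction t with
  | zero => simp [← (Equiv.funUnique (Fin 1) Ω).symm.sum_comp]
  | succ t ih =>
    rw [← (Fin.consEquiv fun _ => Ω).sum_comp, Fintype.sum_prod_type, Finset.sum_comm]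
    simp only [Fin.consEquiv_apply, Fin.prod_univ_succ, Fin.castSucc_zero, Fin.cons_zero,
      Fin.cons_succ, ← Fin.succ_castSucc, ← mul_assoc, ← Finset.sum_mul, hP]
    rw [mul_right_comm, ← ih _ _ fun k => hP k.succ, Finset.sum_mul]
    exact Finset.sum_congr rfl fun _ _ => by ring

theorem sum_mul_ite_mem_eq_of_regenerates {Ω : Type*} [Fintype Ω] [DecidableEq Ω]
    {μ : Ω → ℝ} {s : Finset Ω} (hμ : ∀ σ ∈ s, 0 < μ σ) {ρ : Ω → Ω → ℝ} {τ : Ω}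
    (hregen : ∑ σ ∈ s, (μ σ / ∑ σ' ∈ s, μ σ') * ρ σ τ = μ τ) :
    ∑ σ, μ σ * (if σ ∈ s then ρ σ τ else 0) = (∑ σ ∈ s, μ σ) * μ τ := by
  simp only [mul_ite, mul_zero, Finset.sum_ite_mem, Finset.univ_inter]
  rcases s.eq_empty_or_nonempty with rfl | hs
  · simp
  have hpos : 0 < ∑ σ ∈ s, μ σ := Finset.sum_pos hμ hs
  rw [← hregen, Finset.mul_sum]
  exact Finset.sum_congr rfl fun σ _ => by field_simp

open Classical in
theorem stmt_13_general {Ω ι : Type*} [Fintype Ω] [DecidableEq Ω]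
    (μ : Ω → ℝ) (hμpos : ∀ σ, 0 < μ σ) (hμ1 : ∑ σ, μ σ = 1)
    (f : ι → Finset Ω)
    (ρ : ι → Ω → Ω → ℝ)
    (hρ0 : ∀ i σ τ, 0 ≤ ρ i σ τ)
    (hregen : ∀ i (τ : Ω), ∑ σ ∈ f i, (μ σ / ∑ σ' ∈ f i, μ σ') * ρ i σ τ = μ τ)
    (choice : List Ω → ι) (t : ℕ) (W : Fin t → ι) :
    (∑ traj : Fin (t + 1) → Ω,
        if (∀ k : Fin t, traj k.castSucc ∈ f (W k) ∧
            choice (List.ofFn fun j : Fin (k.val + 1) =>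
              traj (Fin.castLE (Nat.succ_le_succ k.isLt.le) j)) = W k) then
          μ (traj 0) * ∏ k : Fin t, ρ (W k) (traj k.castSucc) (traj k.succ)
        else 0)
      ≤ ∏ k : Fin t, ∑ σ ∈ f (W k), μ σ := by
  set P : Fin t → Ω → Ω → ℝ := fun k σ τ => if σ ∈ f (W k) then ρ (W k) σ τ else 0
  have hP : ∀ k τ, ∑ σ, μ σ * P k σ τ = (∑ σ ∈ f (W k), μ σ) * μ τ := fun k τ =>
    sum_mul_ite_mem_eq_of_regenerates (fun σ _ => hμpos σ) (hregen (W k) τ)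
  calc _ ≤ ∑ traj : Fin (t + 1) → Ω, μ (traj 0) * ∏ k, P k (traj k.castSucc) (traj k.succ) := by
        refine Finset.sum_le_sum fun traj _ => ?_
        simp only [P, Fintype.prod_ite_zero, mul_ite, mul_zero]
        split_ifs with hW hf
        · rfl
        · exact absurd (fun k => (hW k).1) hf
        · exact mul_nonneg (hμpos _).le (Finset.prod_nonneg fun k _ => hρ0 _ _ _)
        · rfl
    _ = ∏ k : Fin t, ∑ σ ∈ f (W k), μ σ := by
        rw [sum_mul_prod_eq_of_left_eigenvector μ P _ hP, hμ1, one_mul]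

open Classical in
/-- If the initial state is distributed as `μ` and `(D,ρ)` regenerate `μ` at every flaw,
then for any fixed sequence of flaws `W = w_1,…,w_t`, the probability that the first `t`
addressed flaws are exactly `w_1,…,w_t` (the addressed flaw at each step being chosen by
an arbitrary history-dependent rule `choice`) is at most `∏_{k} μ(f_{w_k})`. -/
theorem stmt_13 {Ω ι : Type*} [Fintype Ω] [DecidableEq Ω]
    (μ : Ω → ℝ) (hμpos : ∀ σ, 0 < μ σ) (hμ1 : ∑ σ, μ σ = 1)
    (f : ι → Finset Ω) (A : ι → Ω → Finset Ω) (hA : ∀ i, ∀ σ ∈ f i, (A i σ).Nonempty)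
    (ρ : ι → Ω → Ω → ℝ)
    (hρ0 : ∀ i σ τ, 0 ≤ ρ i σ τ)
    (hρsupp : ∀ i, ∀ σ ∈ f i, ∀ τ, τ ∉ A i σ → ρ i σ τ = 0)
    (hρsum : ∀ i, ∀ σ ∈ f i, ∑ τ, ρ i σ τ = 1)
    (hregen : ∀ i (τ : Ω), ∑ σ ∈ f i, (μ σ / ∑ σ' ∈ f i, μ σ') * ρ i σ τ = μ τ)
    (choice : List Ω → ι) (t : ℕ) (W : Fin t → ι) :
    (∑ traj : Fin (t + 1) → Ω,
        if (∀ k : Fin t, traj k.castSucc ∈ f (W k) ∧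
            choice (List.ofFn fun j : Fin (k.val + 1) =>
              traj (Fin.castLE (Nat.succ_le_succ k.isLt.le) j)) = W k) then
          μ (traj 0) * ∏ k : Fin t, ρ (W k) (traj k.castSucc) (traj k.succ)
        else 0)
      ≤ ∏ k : Fin t, ∑ σ ∈ f (W k), μ σ :=
  stmt_13_general μ hμpos hμ1 f ρ hρ0 hregen choice t W
end

section
/- Suppose the initial state is distributed as μ, (D,ρ) regenerate μ at every flaw, and at each step flaws are addressed according to a fixed protocol. For any sequence of flaws a_1,...,a_t, conditioned on the event that for every i ≤ t the state σ_i before the i-th step satisfies σ_i ∈ a_i (and a_i is addressed at step i), the state σ_{t+1} after t steps is distributed exactly according to μ. -/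
/-!
Let `q_t(τ)` be the mass of the trajectories that address `a₁, …, a_t` in turn and end at `τ`.
Splitting off the last step gives `q_{t+1}(τ) = ∑_{σ ∈ f(a_{t+1})} q_t(σ) ρ(σ, τ)`, and
regeneration at `a_{t+1}` turns `q_t = c • μ` into `q_{t+1} = c μ(f(a_{t+1})) • μ`. Hence every
`q_t` is a multiple of `μ`, which is the claim once `q_t` is normalised by its total mass.
-/

open Finset

section

variable {Ω ι : Type*}

def Regenerates (μ : Ω → ℝ) (s : Finset Ω) (κ : Ω → Ω → ℝ) : Prop :=
  ∀ τ, ∑ σ ∈ s, (μ σ / ∑ σ' ∈ s, μ σ') * κ σ τ = μ τ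

namespace Regenerates

variable {μ : Ω → ℝ} {s : Finset Ω} {κ : Ω → Ω → ℝ}

theorem sum_ne_zero [Fintype Ω] (h : Regenerates μ s κ) (hμ : ∑ σ, μ σ = 1) :
    ∑ σ ∈ s, μ σ ≠ 0 := by
  intro h0
  have hμ0 : ∀ τ, μ τ = 0 := fun τ => by simpa [h0] using (h τ).symm
  simp [hμ0] at hμ

theorem sum_mul_eq (h : Regenerates μ s κ) (hs : ∑ σ ∈ s, μ σ ≠ 0) (τ : Ω) :
    ∑ σ ∈ s, μ σ * κ σ τ = μ τ * ∑ σ ∈ s, μ σ := by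
  rw [← h τ, sum_mul]
  refine sum_congr rfl fun σ _ => ?_
  field_simp

end Regenerates

section trajMass

variable [Fintype Ω] [DecidableEq Ω] (μ : Ω → ℝ) (f : ι → Finset Ω) (ρ : ι → Ω → Ω → ℝ)

/-- The mass `q_t(τ)` of the header; `traj k` is the state before step `k + 1`. -/
noncomputable def trajMass {t : ℕ} (a : Fin t → ι) (τ : Ω) : ℝ :=
  ∑ traj : Fin (t + 1) → Ω,
    if (∀ k : Fin t, traj k.castSucc ∈ f (a k)) ∧ traj (Fin.last t) = τ then
      μ (traj 0) * ∏ k : Fin t, ρ (a k) (traj k.castSucc) (traj k.succ)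
    else 0

theorem trajMass_zero (a : Fin 0 → ι) (τ : Ω) : trajMass μ f ρ a τ = μ τ := by
  rw [trajMass, ← (Equiv.funUnique (Fin 1) Ω).symm.sum_comp]
  simp

theorem sum_trajMass {t : ℕ} (a : Fin t → ι) :
    ∑ τ, trajMass μ f ρ a τ =
      ∑ traj : Fin (t + 1) → Ω,
        if ∀ k : Fin t, traj k.castSucc ∈ f (a k) then
          μ (traj 0) * ∏ k : Fin t, ρ (a k) (traj k.castSucc) (traj k.succ)
        else 0 := by
  simp only [trajMass]
  rw [sum_comm]
  refine sum_congr rfl fun traj _ => ?_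
  split_ifs with hP <;> simp [hP]

theorem trajMass_succ {t : ℕ} (a : Fin (t + 1) → ι) (τ : Ω) :
    trajMass μ f ρ a τ =
      ∑ σ ∈ f (a (Fin.last t)),
        trajMass μ f ρ (fun k => a k.castSucc) σ * ρ (a (Fin.last t)) σ τ := by
  simp only [trajMass, sum_mul]
  rw [← (Fin.snocEquiv fun _ : Fin (t + 2) => Ω).sum_comp (M := ℝ), Fintype.sum_prod_type,
    sum_comm, sum_comm (s := f _)]
  refine sum_congr rfl fun g _ => ?_
  simp only [Fin.snocEquiv, Equiv.coe_fn_mk, Fin.snoc_last, Fin.snoc_castSucc, Fin.forall_fin_succ',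
    Fin.prod_univ_castSucc, Fin.succ_castSucc, Fin.succ_last, ite_mul, zero_mul, ite_and]
  have hsnoc0 : ∀ x, Fin.snoc (α := fun _ => Ω) g x 0 = g 0 := fun x =>
    Fin.snoc_castSucc (α := fun _ => Ω) x g 0
  by_cases hlast : g (Fin.last t) ∈ f (a (Fin.last t)) <;> simp [hsnoc0, hlast, mul_assoc]

theorem trajMass_eq_of_regenerates (hμ : ∑ σ, μ σ = 1)
    (hregen : ∀ i, Regenerates μ (f i) (ρ i)) {t : ℕ} (a : Fin t → ι) (τ : Ω) :
    trajMass μ f ρ a τ = (∏ k, ∑ σ ∈ f (a k), μ σ) * μ τ := by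
  induction t generalizing τ with
  | zero => simp [trajMass_zero]
  | succ t ih =>
    calc trajMass μ f ρ a τ
        = (∏ k : Fin t, ∑ σ ∈ f (a k.castSucc), μ σ) *
            ∑ σ ∈ f (a (Fin.last t)), μ σ * ρ (a (Fin.last t)) σ τ := by
          simp only [trajMass_succ, ih, mul_sum, mul_assoc]
      _ = (∏ k, ∑ σ ∈ f (a k), μ σ) * μ τ := by
          rw [(hregen _).sum_mul_eq ((hregen _).sum_ne_zero hμ), Fin.prod_univ_castSucc]
          ring

end trajMass

end

open Classical in
theorem stmt_14_general {Ω ι : Type*} [Fintype Ω] [DecidableEq Ω]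
    (μ : Ω → ℝ) (hμ1 : ∑ σ, μ σ = 1)
    (f : ι → Finset Ω)
    (ρ : ι → Ω → Ω → ℝ)
    (hregen : ∀ i (τ : Ω), ∑ σ ∈ f i, (μ σ / ∑ σ' ∈ f i, μ σ') * ρ i σ τ = μ τ)
    (t : ℕ) (a : Fin t → ι) (τ : Ω) :
    (∑ traj : Fin (t + 1) → Ω,
        if (∀ k : Fin t, traj k.castSucc ∈ f (a k)) ∧ traj (Fin.last t) = τ then
          μ (traj 0) * ∏ k : Fin t, ρ (a k) (traj k.castSucc) (traj k.succ)
        else 0)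
      = μ τ *
        ∑ traj : Fin (t + 1) → Ω,
          if (∀ k : Fin t, traj k.castSucc ∈ f (a k)) then
            μ (traj 0) * ∏ k : Fin t, ρ (a k) (traj k.castSucc) (traj k.succ)
          else 0 := by
  rw [← sum_trajMass, ← trajMass]
  simp only [trajMass_eq_of_regenerates μ f ρ hμ1 hregen]
  rw [← mul_sum, hμ1]
  ring

open Classical in
/-- Process `C`: the initial state is distributed as `μ`, and at step `k` the flaw `a k`
is addressed at the current state (whenever it is present). If `(D,ρ)` regenerates `μ` at
every flaw, then conditioned on the event that `σ_k ∈ f(a_k)` for every `k ≤ t`, the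
state after `t` steps is distributed exactly according to `μ`: for every `τ`,
`Pr[σ_{t+1} = τ ∧ E] = μ(τ) · Pr[E]`. -/
theorem stmt_14 {Ω ι : Type*} [Fintype Ω] [DecidableEq Ω]
    (μ : Ω → ℝ) (hμpos : ∀ σ, 0 < μ σ) (hμ1 : ∑ σ, μ σ = 1)
    (f : ι → Finset Ω) (A : ι → Ω → Finset Ω) (hA : ∀ i, ∀ σ ∈ f i, (A i σ).Nonempty)
    (ρ : ι → Ω → Ω → ℝ)
    (hρ0 : ∀ i σ τ, 0 ≤ ρ i σ τ)
    (hρsupp : ∀ i, ∀ σ ∈ f i, ∀ τ, τ ∉ A i σ → ρ i σ τ = 0)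
    (hρsum : ∀ i, ∀ σ ∈ f i, ∑ τ, ρ i σ τ = 1)
    (hregen : ∀ i (τ : Ω), ∑ σ ∈ f i, (μ σ / ∑ σ' ∈ f i, μ σ') * ρ i σ τ = μ τ)
    (t : ℕ) (a : Fin t → ι) (τ : Ω) :
    (∑ traj : Fin (t + 1) → Ω,
        if (∀ k : Fin t, traj k.castSucc ∈ f (a k)) ∧ traj (Fin.last t) = τ then
          μ (traj 0) * ∏ k : Fin t, ρ (a k) (traj k.castSucc) (traj k.succ)
        else 0)
      = μ τ *
        ∑ traj : Fin (t + 1) → Ω,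
          if (∀ k : Fin t, traj k.castSucc ∈ f (a k)) then
            μ (traj 0) * ∏ k : Fin t, ρ (a k) (traj k.castSucc) (traj k.succ)
          else 0 :=
  stmt_14_general μ hμ1 f ρ hregen t a τ
end

section
/- Let λ_i^σ = max_{τ∈A(i,σ)} ρ_i(σ,τ)μ(σ)/μ(τ), b_i^τ = |{σ ∈ f_i : τ ∈ A(i,σ)}|, b_i = max_τ b_i^τ, γ_i = b_i·max_{σ∈f_i} λ_i^σ, and ξ = max_{σ∈Ω} θ(σ)/μ(σ). Then for any fixed flaw sequence w_1,...,w_t, the probability that the walk started from θ addresses exactly w_1,...,w_t in its first t steps is at most ξ·Π_{i=1}^t γ_{w_i}. -/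
/-!
Weight the trajectories by `ν(σ₁)` instead of `θ(σ₁)`. If `ν ≤ c μ` pointwise, then pushing `ν`
one step along flaw `i` gives a measure `ν'(τ) = ∑_{σ ∈ f_i} ν(σ) ρ_i(σ,τ) ≤ c γ_i μ(τ)`: each of
the at most `b_i` states `σ ∈ f_i` that can reach `τ` contributes
`ν(σ) ρ_i(σ,τ) ≤ c μ(σ) ρ_i(σ,τ) ≤ c λ_i^σ μ(τ)`. Induction on `t`, starting from `θ ≤ ξ μ` and
ending with total mass `∑ ν ≤ c ∑ μ = c`, gives the bound; the condition that the history-dependent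
rule picks `w_k` only removes trajectories of nonnegative weight.
-/

open Finset

lemma sum_le_of_card_le_of_forall_nat_mul_le {α : Type*} {s : Finset α} {g : α → ℝ} {b : ℕ}
    {C : ℝ} (hC : 0 ≤ C) (hcard : #s ≤ b) (hg : ∀ x ∈ s, b * g x ≤ C) :
    ∑ x ∈ s, g x ≤ C := by
  rcases Nat.eq_zero_or_pos b with rfl | hb
  · simp [card_eq_zero.mp (Nat.le_zero.mp hcard), hC]
  have hb' : (0 : ℝ) < b := by exact_mod_cast hb
  calc ∑ x ∈ s, g x ≤ #s • (C / b) :=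
        sum_le_card_nsmul _ _ _ fun x hx => (le_div_iff₀' hb').mpr (hg x hx)
    _ ≤ b * (C / b) := by
        rw [nsmul_eq_mul]
        exact mul_le_mul_of_nonneg_right (by exact_mod_cast hcard) (div_nonneg hC hb'.le)
    _ = C := mul_div_cancel₀ C hb'.ne'

section Trajectories

variable {Ω ι : Type*} [DecidableEq Ω]

def flawStep (s : Finset Ω) (ρ : Ω → Ω → ℝ) (ν : Ω → ℝ) (τ : Ω) : ℝ :=
  ∑ σ ∈ s, ν σ * ρ σ τ

lemma flawStep_le {μ : Ω → ℝ} (hμ : ∀ σ, 0 ≤ μ σ) {s : Finset Ω} {A : Ω → Finset Ω}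
    {ρ : Ω → Ω → ℝ} (hρ0 : ∀ σ τ, 0 ≤ ρ σ τ) (hρsupp : ∀ σ ∈ s, ∀ τ, τ ∉ A σ → ρ σ τ = 0)
    {lam : Ω → ℝ} (hlam : ∀ σ ∈ s, ∀ τ ∈ A σ, ρ σ τ * μ σ ≤ lam σ * μ τ)
    {b : ℕ} (hb : ∀ τ, #(s.filter fun σ => τ ∈ A σ) ≤ b)
    {γ : ℝ} (hγ0 : 0 ≤ γ) (hγ : ∀ σ ∈ s, b * lam σ ≤ γ)
    {ν : Ω → ℝ} {c : ℝ} (hc : 0 ≤ c) (hν : ∀ σ, ν σ ≤ c * μ σ) (τ : Ω) :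
    flawStep s ρ ν τ ≤ c * γ * μ τ := by
  have hsupp : flawStep s ρ ν τ = ∑ σ ∈ s.filter fun σ => τ ∈ A σ, ν σ * ρ σ τ := by
    rw [flawStep, sum_filter_of_ne]
    intro σ hσ hne
    by_contra hτ
    exact hne (by rw [hρsupp σ hσ τ hτ, mul_zero])
  have hterm : ∀ σ ∈ s.filter fun σ => τ ∈ A σ, ν σ * ρ σ τ ≤ lam σ * (c * μ τ) := by
    intro σ hσ
    obtain ⟨hσs, hτ⟩ := mem_filter.mp hσ
    calc ν σ * ρ σ τ ≤ c * μ σ * ρ σ τ := mul_le_mul_of_nonneg_right (hν σ) (hρ0 σ τ)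
      _ = c * (ρ σ τ * μ σ) := by ring
      _ ≤ c * (lam σ * μ τ) := mul_le_mul_of_nonneg_left (hlam σ hσs τ hτ) hc
      _ = lam σ * (c * μ τ) := by ring
  have hlam_sum : ∑ σ ∈ s.filter fun σ => τ ∈ A σ, lam σ ≤ γ :=
    sum_le_of_card_le_of_forall_nat_mul_le hγ0 (hb τ) fun σ hσ => hγ σ (mem_filter.mp hσ).1
  calc flawStep s ρ ν τ ≤ ∑ σ ∈ s.filter fun σ => τ ∈ A σ, lam σ * (c * μ τ) := by
        rw [hsupp]; exact sum_le_sum hterm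
    _ = (∑ σ ∈ s.filter fun σ => τ ∈ A σ, lam σ) * (c * μ τ) := (sum_mul ..).symm
    _ ≤ γ * (c * μ τ) := mul_le_mul_of_nonneg_right hlam_sum (mul_nonneg hc (hμ τ))
    _ = c * γ * μ τ := by ring

variable [Fintype Ω] (f : ι → Finset Ω) (ρ : ι → Ω → Ω → ℝ)

def trajectoryMass (ν : Ω → ℝ) (t : ℕ) (W : Fin t → ι) : ℝ :=
  ∑ traj : Fin (t + 1) → Ω, if ∀ k : Fin t, traj k.castSucc ∈ f (W k) then
    ν (traj 0) * ∏ k : Fin t, ρ (W k) (traj k.castSucc) (traj k.succ) else 0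

lemma trajectoryMass_zero (ν : Ω → ℝ) (W : Fin 0 → ι) :
    trajectoryMass f ρ ν 0 W = ∑ σ, ν σ := by
  simp only [trajectoryMass, IsEmpty.forall_iff, if_true, univ_eq_empty, prod_empty, mul_one]
  exact Fintype.sum_equiv (Equiv.funUnique (Fin 1) Ω) _ _ fun _ => rfl

lemma trajectoryMass_succ (ν : Ω → ℝ) (t : ℕ) (W : Fin (t + 1) → ι) :
    trajectoryMass f ρ ν (t + 1) W =
      trajectoryMass f ρ (flawStep (f (W 0)) (ρ (W 0)) ν) t (Fin.tail W) := by
  rw [trajectoryMass, ← (Fin.consEquiv fun _ : Fin (t + 1 + 1) => Ω).sum_comp,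
    Fintype.sum_prod_type, sum_comm]
  refine sum_congr rfl fun rest _ => ?_
  simp only [Fin.consEquiv_apply, Fin.forall_fin_succ, Fin.prod_univ_succ, ← Fin.succ_castSucc,
    Fin.castSucc_zero, Fin.cons_zero, Fin.cons_succ, Fin.tail]
  by_cases hrest : ∀ k : Fin t, rest k.castSucc ∈ f (W k.succ)
  · simp only [hrest, implies_true, and_true, if_true, flawStep, sum_mul]
    rw [sum_ite_mem, univ_inter]
    exact sum_congr rfl fun σ _ => by ring
  · simp [hrest]

lemma trajectoryMass_le {μ : Ω → ℝ} (hμ1 : ∑ σ, μ σ ≤ 1) {γ : ι → ℝ} (hγ0 : ∀ i, 0 ≤ γ i)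
    (hstep : ∀ i (ν : Ω → ℝ) (c : ℝ), 0 ≤ c → (∀ σ, ν σ ≤ c * μ σ) →
      ∀ τ, flawStep (f i) (ρ i) ν τ ≤ c * γ i * μ τ)
    (t : ℕ) (W : Fin t → ι) {ν : Ω → ℝ} {c : ℝ} (hc : 0 ≤ c) (hν : ∀ σ, ν σ ≤ c * μ σ) :
    trajectoryMass f ρ ν t W ≤ c * ∏ k, γ (W k) := by
  induction t generalizing ν c with
  | zero =>
    calc trajectoryMass f ρ ν 0 W = ∑ σ, ν σ := trajectoryMass_zero f ρ ν W
      _ ≤ ∑ σ, c * μ σ := sum_le_sum fun σ _ => hν σ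
      _ = c * ∑ σ, μ σ := (mul_sum ..).symm
      _ ≤ c * ∏ k, γ (W k) := by simpa using mul_le_of_le_one_right hc hμ1
  | succ t ih =>
    rw [trajectoryMass_succ, Fin.prod_univ_succ, ← mul_assoc]
    exact ih (Fin.tail W) (mul_nonneg hc (hγ0 (W 0))) (hstep (W 0) ν c hc hν)

open Classical in
lemma sum_ite_and_le_trajectoryMass {ν : Ω → ℝ} (hν : ∀ σ, 0 ≤ ν σ)
    (hρ0 : ∀ i σ τ, 0 ≤ ρ i σ τ) (t : ℕ) (W : Fin t → ι) (P : Fin t → (Fin (t + 1) → Ω) → Prop) :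
    (∑ traj : Fin (t + 1) → Ω, if ∀ k : Fin t, traj k.castSucc ∈ f (W k) ∧ P k traj then
      ν (traj 0) * ∏ k : Fin t, ρ (W k) (traj k.castSucc) (traj k.succ) else 0)
      ≤ trajectoryMass f ρ ν t W := by
  refine sum_le_sum fun traj _ => ?_
  by_cases h : ∀ k : Fin t, traj k.castSucc ∈ f (W k) ∧ P k traj
  · rw [if_pos h, if_pos fun k => (h k).1]
  · rw [if_neg h]
    split
    · exact mul_nonneg (hν _) (prod_nonneg fun k _ => hρ0 _ _ _)
    · exact le_rfl

end Trajectories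

open Classical in
theorem stmt_16_general {Ω ι : Type*} [Fintype Ω] [DecidableEq Ω]
    (μ : Ω → ℝ) (hμpos : ∀ σ, 0 < μ σ) (hμ1 : ∑ σ, μ σ = 1)
    (θ : Ω → ℝ) (hθ0 : ∀ σ, 0 ≤ θ σ)
    (ξ : ℝ) (hξ : IsGreatest {x : ℝ | ∃ σ : Ω, x = θ σ / μ σ} ξ)
    (f : ι → Finset Ω) (A : ι → Ω → Finset Ω)
    (ρ : ι → Ω → Ω → ℝ)
    (hρ0 : ∀ i σ τ, 0 ≤ ρ i σ τ)
    (hρsupp : ∀ i, ∀ σ ∈ f i, ∀ τ, τ ∉ A i σ → ρ i σ τ = 0)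
    (lam : ι → Ω → ℝ)
    (hlam : ∀ i, ∀ σ ∈ f i,
      IsGreatest {x : ℝ | ∃ τ ∈ A i σ, x = ρ i σ τ * μ σ / μ τ} (lam i σ))
    (b : ι → ℕ)
    (hb : ∀ i, IsGreatest {n : ℕ | ∃ τ : Ω, n = ((f i).filter fun σ => τ ∈ A i σ).card} (b i))
    (γ : ι → ℝ)
    (hγ : ∀ i, IsGreatest {x : ℝ | ∃ σ ∈ f i, x = (b i : ℝ) * lam i σ} (γ i))
    (choice : List Ω → ι) (t : ℕ) (W : Fin t → ι) :
    (∑ traj : Fin (t + 1) → Ω,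
        if (∀ k : Fin t, traj k.castSucc ∈ f (W k) ∧
            choice (List.ofFn fun j : Fin (k.val + 1) =>
              traj (Fin.castLE (Nat.succ_le_succ k.isLt.le) j)) = W k) then
          θ (traj 0) * ∏ k : Fin t, ρ (W k) (traj k.castSucc) (traj k.succ)
        else 0)
      ≤ ξ * ∏ k : Fin t, γ (W k) := by
  have hξ0 : 0 ≤ ξ := by
    obtain ⟨σ, rfl⟩ := hξ.1
    exact div_nonneg (hθ0 σ) (hμpos σ).le
  have hθξ : ∀ σ, θ σ ≤ ξ * μ σ := fun σ => (div_le_iff₀ (hμpos σ)).mp (hξ.2 ⟨σ, rfl⟩)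
  have hlam_le : ∀ i, ∀ σ ∈ f i, ∀ τ ∈ A i σ, ρ i σ τ * μ σ ≤ lam i σ * μ τ :=
    fun i σ hσ τ hτ => (div_le_iff₀ (hμpos τ)).mp ((hlam i σ hσ).2 ⟨τ, hτ, rfl⟩)
  have hγ0 : ∀ i, 0 ≤ γ i := by
    intro i
    obtain ⟨σ, hσ, hγσ⟩ := (hγ i).1
    obtain ⟨τ, -, hτ⟩ := (hlam i σ hσ).1
    rw [hγσ, hτ]
    exact mul_nonneg (Nat.cast_nonneg _)
      (div_nonneg (mul_nonneg (hρ0 i σ τ) (hμpos σ).le) (hμpos τ).le)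
  have hstep : ∀ i (ν : Ω → ℝ) (c : ℝ), 0 ≤ c → (∀ σ, ν σ ≤ c * μ σ) →
      ∀ τ, flawStep (f i) (ρ i) ν τ ≤ c * γ i * μ τ := fun i _ _ hc hν =>
    flawStep_le (fun σ => (hμpos σ).le) (hρ0 i) (hρsupp i) (hlam_le i)
      (fun τ => (hb i).2 ⟨τ, rfl⟩) (hγ0 i) (fun σ hσ => (hγ i).2 ⟨σ, hσ, rfl⟩) hc hν
  exact (sum_ite_and_le_trajectoryMass f ρ hθ0 hρ0 t W _).trans
    (trajectoryMass_le f ρ hμ1.le hγ0 hstep t W hξ0 hθξ)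

open Classical in
/-- With `λ_i^σ = max_{τ∈A(i,σ)} ρ_i(σ,τ)μ(σ)/μ(τ)`, `b_i = max_τ |{σ ∈ f_i : τ ∈ A(i,σ)}|`,
`γ_i = b_i · max_{σ∈f_i} λ_i^σ` and `ξ = max_σ θ(σ)/μ(σ)`: for any fixed flaw sequence
`w_1,…,w_t`, the probability that the walk started from `θ` addresses exactly
`w_1,…,w_t` in its first `t` steps is at most `ξ ∏_k γ_{w_k}`. -/
theorem stmt_16 {Ω ι : Type*} [Fintype Ω] [DecidableEq Ω]
    (μ : Ω → ℝ) (hμpos : ∀ σ, 0 < μ σ) (hμ1 : ∑ σ, μ σ = 1)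
    (θ : Ω → ℝ) (hθ0 : ∀ σ, 0 ≤ θ σ) (hθ1 : ∑ σ, θ σ = 1)
    (ξ : ℝ) (hξ : IsGreatest {x : ℝ | ∃ σ : Ω, x = θ σ / μ σ} ξ)
    (f : ι → Finset Ω) (A : ι → Ω → Finset Ω) (hA : ∀ i, ∀ σ ∈ f i, (A i σ).Nonempty)
    (ρ : ι → Ω → Ω → ℝ)
    (hρ0 : ∀ i σ τ, 0 ≤ ρ i σ τ)
    (hρsupp : ∀ i, ∀ σ ∈ f i, ∀ τ, τ ∉ A i σ → ρ i σ τ = 0)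
    (hρsum : ∀ i, ∀ σ ∈ f i, ∑ τ, ρ i σ τ = 1)
    (lam : ι → Ω → ℝ)
    (hlam : ∀ i, ∀ σ ∈ f i,
      IsGreatest {x : ℝ | ∃ τ ∈ A i σ, x = ρ i σ τ * μ σ / μ τ} (lam i σ))
    (b : ι → ℕ)
    (hb : ∀ i, IsGreatest {n : ℕ | ∃ τ : Ω, n = ((f i).filter fun σ => τ ∈ A i σ).card} (b i))
    (γ : ι → ℝ)
    (hγ : ∀ i, IsGreatest {x : ℝ | ∃ σ ∈ f i, x = (b i : ℝ) * lam i σ} (γ i))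
    (choice : List Ω → ι) (t : ℕ) (W : Fin t → ι) :
    (∑ traj : Fin (t + 1) → Ω,
        if (∀ k : Fin t, traj k.castSucc ∈ f (W k) ∧
            choice (List.ofFn fun j : Fin (k.val + 1) =>
              traj (Fin.castLE (Nat.succ_le_succ k.isLt.le) j)) = W k) then
          θ (traj 0) * ∏ k : Fin t, ρ (W k) (traj k.castSucc) (traj k.succ)
        else 0)
      ≤ ξ * ∏ k : Fin t, γ (W k) :=
  stmt_16_general μ hμpos hμ1 θ hθ0 ξ hξ f A ρ hρ0 hρsupp lam hlam b hb γ hγ choice t W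
end

section
/- In the acyclic-edge-coloring walk, the action digraph is atomic: for every flaw f_C (C an even cycle of length ≥ 6) and every proper coloring τ with no bichromatic 4-cycle, there is at most one state σ ∈ f_C with τ ∈ A(C,σ); i.e., b_C^τ ≤ 1. -/
/-!
Off the recolored edges `τ` remembers `σ`, in particular on the two fixed adjacent edges
`s(c 0, c 1)` and `s(c 1, c 2)`. Since `C` is bichromatic in `σ`, these two edges carry its
two colours, and alternation around `C` then determines `σ` on all of `C`.
-/

section

variable {V P : Type*} {k : ℕ} {c : ZMod k → V}

/-- A coincidence `s(c i, c (i+1)) = s(c (j+1), c j)` forces `2 = 0` in `ZMod k`. -/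
theorem injective_cycle_edge (hk : k ≠ 2) (hc : Function.Injective c) :
    Function.Injective fun i : ZMod k => s(c i, c (i + 1)) := by
  intro i j h
  rcases Sym2.eq_iff.mp h with ⟨hij, -⟩ | ⟨hij, hji⟩
  · exact hc hij
  · have hij : i = j + 1 := hc hij
    have hji : i + 1 = j := hc hji
    have htwo : ((2 : ℕ) : ZMod k) = 0 := by
      subst hij
      push_cast
      linear_combination hji
    have hk1 : k = 1 :=
      ((Nat.dvd_prime Nat.prime_two).mp ((ZMod.natCast_eq_zero_iff 2 k).mp htwo)).resolve_right hk
    subst hk1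
    exact Subsingleton.elim i j

theorem eq_of_alternating_of_agree_on_first_edges (hk : k ≠ 1) {σ σ' : Sym2 V → P} {a b a' b' : P}
    (hσ : ∀ i : ZMod k, σ s(c i, c (i + 1)) = if i.val % 2 = 0 then a else b)
    (hσ' : ∀ i : ZMod k, σ' s(c i, c (i + 1)) = if i.val % 2 = 0 then a' else b')
    (h₀ : σ s(c 0, c (0 + 1)) = σ' s(c 0, c (0 + 1)))
    (h₁ : σ s(c 1, c (1 + 1)) = σ' s(c 1, c (1 + 1)))
    (hoff : ∀ x : Sym2 V, (∀ i : ZMod k, x ≠ s(c i, c (i + 1))) → σ x = σ' x) :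
    σ = σ' := by
  have hval₁ : (1 : ZMod k).val = 1 := by
    rw [ZMod.val_one_eq_one_mod, Nat.one_mod_eq_one.mpr hk]
  have ha : a = a' := by simpa using (hσ 0).symm.trans (h₀.trans (hσ' 0))
  have hb : b = b' := by simpa [hval₁] using (hσ 1).symm.trans (h₁.trans (hσ' 1))
  funext x
  by_cases hx : ∃ i : ZMod k, x = s(c i, c (i + 1))
  · obtain ⟨i, rfl⟩ := hx
    rw [hσ, hσ', ha, hb]
  · push Not at hx
    exact hoff x hx

end

theorem stmt_19_general {V P : Type*} (k : ℕ) (hk6 : 6 ≤ k)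
    (c : ZMod k → V) (hc : Function.Injective c)
    (σ σ' τ : Sym2 V → P)
    (hσ : ∃ a b : P, a ≠ b ∧
      ∀ i : ZMod k, σ s(c i, c (i + 1)) = if i.val % 2 = 0 then a else b)
    (hσ' : ∃ a b : P, a ≠ b ∧
      ∀ i : ZMod k, σ' s(c i, c (i + 1)) = if i.val % 2 = 0 then a else b)
    (hagree : ∀ x : Sym2 V,
      (∀ i : ZMod k, i ≠ 0 → i ≠ 1 → x ≠ s(c i, c (i + 1))) → σ x = τ x)
    (hagree' : ∀ x : Sym2 V,
      (∀ i : ZMod k, i ≠ 0 → i ≠ 1 → x ≠ s(c i, c (i + 1))) → σ' x = τ x) :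
    σ = σ' := by
  obtain ⟨a, b, -, hσ⟩ := hσ
  obtain ⟨a', b', -, hσ'⟩ := hσ'
  have hkept : ∀ x : Sym2 V, (∀ i : ZMod k, i ≠ 0 → i ≠ 1 → x ≠ s(c i, c (i + 1))) →
      σ x = σ' x := fun x hx => (hagree x hx).trans (hagree' x hx).symm
  have hedge := injective_cycle_edge (by omega) hc
  refine eq_of_alternating_of_agree_on_first_edges (by omega) hσ hσ' ?_ ?_
    (fun x hx => hkept x fun i _ _ => hx i)
  · exact hkept _ fun i hi _ => hedge.ne (Ne.symm hi)
  · exact hkept _ fun i _ hi => hedge.ne (Ne.symm hi)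

/-- Atomicity of the acyclic-edge-coloring walk: let `C` be an even cycle of length
`k ≥ 6` with vertices `c 0, c 1, …` and edges `s(c i, c (i+1))`, and let the fixed
adjacent edges be `e₁ = s(c 0, c 1)` and `e₂ = s(c 1, c 2)`. If two colorings `σ, σ'`
both make `C` bichromatic (with alternating colors) and both agree with a coloring `τ`
on every edge other than the recolored edges `s(c i, c (i+1))`, `i ∉ {0,1}`, then
`σ = σ'`; i.e. the prior state is uniquely recoverable from `τ` and `C`, so `b_C^τ ≤ 1`. -/
theorem stmt_19 {V P : Type*} [DecidableEq V] (k : ℕ) (hk6 : 6 ≤ k) (hke : Even k)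
    (c : ZMod k → V) (hc : Function.Injective c)
    (σ σ' τ : Sym2 V → P)
    (hσ : ∃ a b : P, a ≠ b ∧
      ∀ i : ZMod k, σ s(c i, c (i + 1)) = if i.val % 2 = 0 then a else b)
    (hσ' : ∃ a b : P, a ≠ b ∧
      ∀ i : ZMod k, σ' s(c i, c (i + 1)) = if i.val % 2 = 0 then a else b)
    (hagree : ∀ x : Sym2 V,
      (∀ i : ZMod k, i ≠ 0 → i ≠ 1 → x ≠ s(c i, c (i + 1))) → σ x = τ x)
    (hagree' : ∀ x : Sym2 V,
      (∀ i : ZMod k, i ≠ 0 → i ≠ 1 → x ≠ s(c i, c (i + 1))) → σ' x = τ x) :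
    σ = σ' :=
  stmt_19_general k hk6 c hc σ σ' τ hσ hσ' hagree hagree'
end
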